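/- arXiv:1103.4190 — 7 statements merged into one kernel-verified Lean document; each statement's English description precedes it below -/
import Mathlib

section
/- Fix real numbers s > -1/3 and s1 with 0 ≤ s1 < min(3s + 1, s + 1). Then there exist constants C > 0 and ε0 > 0 such that for every ε ∈ (0, ε0] and all nonzero integers k1, k2, k3, k4 with k1 + k2 + k3 + k4 = 0 and (k1 + k2)(k1 + k3)(k2 + k3) ≠ 0, one has |k1 k2 k3|^{-s} |k4|^{s1} ≤ C |k1| (|k1 + k2| · |k1 + k3| · |k2 + k3|)^{1/2 - 11ε}. -/
lemma stmt4_two_large (m1 M x y z : ℝ) (hm1 : 1 ≤ m1) (hx : M/12 ≤ x) (hy : M/12 ≤ y)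
    (hz : 1 ≤ z) (hx1 : 1 ≤ x) (hy1 : 1 ≤ y) (hM : 0 ≤ M) :
    M^2 ≤ 144 * (m1 * (x * y * z)) := by
  have h1 : (M/12)*(M/12) ≤ x*y := mul_le_mul hx hy (by positivity) (by linarith)
  have h2 : (0:ℝ) ≤ (m1*z - 1)*(x*y) :=
    mul_nonneg (by nlinarith) (by positivity)
  nlinarith [h1, h2]

lemma stmt4_aux (m1 M a b c : ℝ) (hm1 : 1 ≤ m1) (hM : 1 ≤ M)
    (ha : 1 ≤ a) (hb : 1 ≤ b) (hc : 1 ≤ c)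
    (hsum : 2*M ≤ a+b+c)
    (ta : a ≤ b + c + 2*m1) (tb : b ≤ a + c + 2*m1) (tc : c ≤ a + b + 2*m1) :
    M^2 ≤ 144 * (m1 * (a*b*c)) := by
  have hM0 : (0:ℝ) ≤ M := by linarith
  rcases le_or_gt (M/12) a with h1|h1 <;> rcases le_or_gt (M/12) b with h2|h2 <;>
    rcases le_or_gt (M/12) c with h3|h3
  · exact stmt4_two_large m1 M a b c hm1 h1 h2 hc ha hb hM0
  · exact stmt4_two_large m1 M a b c hm1 h1 h2 hc ha hb hM0
  · have := stmt4_two_large m1 M a c b hm1 h1 h3 hb ha hc hM0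
    nlinarith [this]
  · nlinarith [mul_nonneg (mul_nonneg (by linarith : (0:ℝ) ≤ m1) (by linarith : (0:ℝ) ≤ a)) (by nlinarith : (0:ℝ) ≤ b*c - 1)]
  · have := stmt4_two_large m1 M b c a hm1 h2 h3 ha hb hc hM0
    nlinarith [this]
  · nlinarith [mul_nonneg (mul_nonneg (by linarith : (0:ℝ) ≤ m1) (by linarith : (0:ℝ) ≤ b)) (by nlinarith : (0:ℝ) ≤ a*c - 1)]
  · nlinarith [mul_nonneg (mul_nonneg (by linarith : (0:ℝ) ≤ m1) (by linarith : (0:ℝ) ≤ c)) (by nlinarith : (0:ℝ) ≤ a*b - 1)]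
  · linarith

lemma stmt4_le_mul3 (x y z : ℝ) (hx : 0 ≤ x) (hy : 1 ≤ y) (hz : 1 ≤ z) :
    x ≤ x * y * z := by nlinarith [mul_nonneg hx (by nlinarith : (0:ℝ) ≤ y * z - 1)]

set_option maxHeartbeats 1000000 in
/-- Case `s > -1/3` of the pointwise multiplier bound (22): for `0 ≤ s1 < min(3s+1, s+1)`
there exist `C > 0` and `ε0 > 0` such that for all `ε ∈ (0, ε0]` and all nonzero integers
`k1, k2, k3, k4` with `k1+k2+k3+k4 = 0` and `(k1+k2)(k1+k3)(k2+k3) ≠ 0`,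
`|k1 k2 k3|^{-s} |k4|^{s1} ≤ C |k1| (|k1+k2| |k1+k3| |k2+k3|)^{1/2 - 11ε}`. -/
theorem stmt_4 (s s1 : ℝ) (hs : -1 / 3 < s) (hs1 : 0 ≤ s1)
    (hs1' : s1 < min (3 * s + 1) (s + 1)) :
    ∃ C > (0 : ℝ), ∃ ε0 > (0 : ℝ), ∀ ε : ℝ, 0 < ε → ε ≤ ε0 →
      ∀ k1 k2 k3 k4 : ℤ, k1 ≠ 0 → k2 ≠ 0 → k3 ≠ 0 → k4 ≠ 0 →
        k1 + k2 + k3 + k4 = 0 → (k1 + k2) * (k1 + k3) * (k2 + k3) ≠ 0 →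
        |((k1 * k2 * k3 : ℤ) : ℝ)| ^ (-s) * |(k4 : ℝ)| ^ s1 ≤
          C * |(k1 : ℝ)| *
            (|((k1 + k2 : ℤ) : ℝ)| * |((k1 + k3 : ℤ) : ℝ)| * |((k2 + k3 : ℤ) : ℝ)|) ^
              (1 / 2 - 11 * ε) := by
  rw [lt_min_iff] at hs1'
  obtain ⟨hA, hB⟩ := hs1'
  set σ : ℝ := max (max (s1 - s) (s1 - 3*s)) 0 with hσdef
  have hσ0 : 0 ≤ σ := le_max_right _ _
  have hσ1 : σ < 1 := by
    rw [hσdef, max_lt_iff, max_lt_iff]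
    exact ⟨⟨by linarith, by linarith⟩, one_pos⟩
  have h3s1 : (1:ℝ) ≤ (3:ℝ) ^ s1 := by
    calc (1:ℝ) = (3:ℝ) ^ (0:ℝ) := (Real.rpow_zero 3).symm
    _ ≤ (3:ℝ) ^ s1 := Real.rpow_le_rpow_of_exponent_le (by norm_num) hs1
  refine ⟨12 * 3 ^ s1, by positivity, min ((1-σ)/22) (1/44),
    lt_min (by linarith) (by norm_num), ?_⟩
  intro ε hε hεle k1 k2 k3 k4 h1 h2 h3 h4 hsum hprod
  rw [le_min_iff] at hεle
  obtain ⟨hεσ, hε44⟩ := hεle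
  -- notation
  have habs : ∀ n : ℤ, n ≠ 0 → 1 ≤ |(n:ℝ)| := by
    intro n hn
    have := Int.one_le_abs hn
    calc (1:ℝ) = ((1:ℤ):ℝ) := by norm_num
    _ ≤ ((|n|:ℤ):ℝ) := by exact_mod_cast this
    _ = |(n:ℝ)| := by push_cast; ring
  have hab : k1 + k2 ≠ 0 := fun h => hprod (by rw [h]; ring)
  have hac : k1 + k3 ≠ 0 := fun h => hprod (by rw [h]; ring)
  have hbc : k2 + k3 ≠ 0 := fun h => hprod (by rw [h]; ring)
  set m1 := |(k1:ℝ)| with hm1d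
  set m2 := |(k2:ℝ)| with hm2d
  set m3 := |(k3:ℝ)| with hm3d
  set m4 := |(k4:ℝ)| with hm4d
  set a := |((k1 + k2 : ℤ) : ℝ)| with had
  set b := |((k1 + k3 : ℤ) : ℝ)| with hbd
  set c := |((k2 + k3 : ℤ) : ℝ)| with hcd
  have hm1 : 1 ≤ m1 := habs _ h1
  have hm2 : 1 ≤ m2 := habs _ h2
  have hm3 : 1 ≤ m3 := habs _ h3
  have hm4 : 1 ≤ m4 := habs _ h4
  have ha1 : 1 ≤ a := habs _ hab
  have hb1 : 1 ≤ b := habs _ hac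
  have hc1 : 1 ≤ c := habs _ hbc
  set M := max (max m1 m2) (max m3 m4) with hMd
  have hM1 : 1 ≤ M := le_trans hm1 (le_trans (le_max_left _ _) (le_max_left _ _))
  have hM0 : (0:ℝ) < M := lt_of_lt_of_le one_pos hM1
  have hm1M : m1 ≤ M := le_trans (le_max_left _ _) (le_max_left _ _)
  have hm2M : m2 ≤ M := le_trans (le_max_right _ _) (le_max_left _ _)
  have hm3M : m3 ≤ M := le_trans (le_max_left _ _) (le_max_right _ _)
  have hm4M : m4 ≤ M := le_trans (le_max_right _ _) (le_max_right _ _)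
  -- abs of cast sums
  have haeq : a = |(k1:ℝ) + (k2:ℝ)| := by rw [had]; push_cast; ring_nf
  have hbeq : b = |(k1:ℝ) + (k3:ℝ)| := by rw [hbd]; push_cast; ring_nf
  have hceq : c = |(k2:ℝ) + (k3:ℝ)| := by rw [hcd]; push_cast; ring_nf
  have hsumR : (k1:ℝ) + k2 + k3 + k4 = 0 := by exact_mod_cast congrArg (Int.cast : ℤ → ℝ) hsum
  -- triangle inequalities
  have key1 : 2 * m1 ≤ a + b + c := by
    have : 2 * (k1:ℝ) = ((k1:ℝ)+k2) + ((k1:ℝ)+k3) - ((k2:ℝ)+k3) := by ring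
    calc 2 * m1 = |2 * (k1:ℝ)| := by rw [hm1d, abs_mul]; norm_num
    _ ≤ a + b + c := by
        rw [this, haeq, hbeq, hceq]
        exact le_trans (abs_sub _ _) (by linarith [abs_add_le ((k1:ℝ)+k2) ((k1:ℝ)+k3)])
  have key2 : 2 * m2 ≤ a + b + c := by
    have : 2 * (k2:ℝ) = ((k1:ℝ)+k2) - ((k1:ℝ)+k3) + ((k2:ℝ)+k3) := by ring
    calc 2 * m2 = |2 * (k2:ℝ)| := by rw [hm2d, abs_mul]; norm_num
    _ ≤ a + b + c := by
        rw [this, haeq, hbeq, hceq]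
        exact le_trans (abs_add_le _ _) (by linarith [abs_sub ((k1:ℝ)+k2) ((k1:ℝ)+k3)])
  have key3 : 2 * m3 ≤ a + b + c := by
    have : 2 * (k3:ℝ) = -((k1:ℝ)+k2) + ((k1:ℝ)+k3) + ((k2:ℝ)+k3) := by ring
    calc 2 * m3 = |2 * (k3:ℝ)| := by rw [hm3d, abs_mul]; norm_num
    _ ≤ a + b + c := by
        rw [this, haeq, hbeq, hceq]
        refine le_trans (abs_add_le _ _) ?_
        have := abs_add_le (-((k1:ℝ)+k2)) ((k1:ℝ)+k3)
        rw [abs_neg] at this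
        linarith
  have key4 : 2 * m4 ≤ a + b + c := by
    have : 2 * (k4:ℝ) = -(((k1:ℝ)+k2) + ((k1:ℝ)+k3) + ((k2:ℝ)+k3)) := by linarith
    calc 2 * m4 = |2 * (k4:ℝ)| := by rw [hm4d, abs_mul]; norm_num
    _ ≤ a + b + c := by
        rw [this, haeq, hbeq, hceq, abs_neg]
        exact le_trans (abs_add_le _ _) (by linarith [abs_add_le ((k1:ℝ)+k2) ((k1:ℝ)+k3)])
  have hsumabc : 2 * M ≤ a + b + c := by
    rcases max_cases (max m1 m2) (max m3 m4) with ⟨hM', _⟩|⟨hM', _⟩ <;>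
      rw [hMd, hM'] <;>
      [rcases max_cases m1 m2 with ⟨h', _⟩|⟨h', _⟩; rcases max_cases m3 m4 with ⟨h', _⟩|⟨h', _⟩] <;>
      rw [h'] <;> linarith
  -- triangle inequalities for m1 vs sums
  have ta : a ≤ b + c + 2*m1 := by
    have : (k1:ℝ)+k2 = ((k1:ℝ)+k3) - ((k2:ℝ)+k3) + 2*(k1:ℝ) - 2*(k1:ℝ) + ((k2:ℝ)+k3) - ((k1:ℝ)+k3) + ((k1:ℝ)+k2) := by ring
    have e : (k1:ℝ)+k2 = -((k1:ℝ)+k3) + ((k2:ℝ)+k3) + 2*(k1:ℝ) := by ring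
    rw [haeq, hbeq, hceq, e]
    have t1 := abs_add_le (-((k1:ℝ)+k3) + ((k2:ℝ)+k3)) (2*(k1:ℝ))
    have t2 := abs_add_le (-((k1:ℝ)+k3)) ((k2:ℝ)+k3)
    rw [abs_neg] at t2
    have t3 : |2*(k1:ℝ)| = 2*m1 := by rw [hm1d, abs_mul]; norm_num
    linarith
  have tb : b ≤ a + c + 2*m1 := by
    have e : (k1:ℝ)+k3 = -((k1:ℝ)+k2) + ((k2:ℝ)+k3) + 2*(k1:ℝ) := by ring
    rw [haeq, hbeq, hceq, e]
    have t1 := abs_add_le (-((k1:ℝ)+k2) + ((k2:ℝ)+k3)) (2*(k1:ℝ))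
    have t2 := abs_add_le (-((k1:ℝ)+k2)) ((k2:ℝ)+k3)
    rw [abs_neg] at t2
    have t3 : |2*(k1:ℝ)| = 2*m1 := by rw [hm1d, abs_mul]; norm_num
    linarith
  have tc : c ≤ a + b + 2*m1 := by
    have e : (k2:ℝ)+k3 = ((k1:ℝ)+k2) + ((k1:ℝ)+k3) - 2*(k1:ℝ) := by ring
    rw [haeq, hbeq, hceq, e]
    have t1 := abs_sub (((k1:ℝ)+k2) + ((k1:ℝ)+k3)) (2*(k1:ℝ))
    have t2 := abs_add_le ((k1:ℝ)+k2) ((k1:ℝ)+k3)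
    have t3 : |2*(k1:ℝ)| = 2*m1 := by rw [hm1d, abs_mul]; norm_num
    linarith
  have hkey : M^2 ≤ 144 * (m1 * (a*b*c)) :=
    stmt4_aux m1 M a b c hm1 hM1 ha1 hb1 hc1 hsumabc ta tb tc
  -- exponents
  set α : ℝ := 1/2 - 11*ε with hαd
  have hα0 : 0 ≤ α := by rw [hαd]; linarith
  have hα1 : α ≤ 1 := by rw [hαd]; linarith
  have hσ2α : σ ≤ 2*α := by rw [hαd]; linarith
  -- LHS bound: |k1k2k3|^(-s) * m4^s1 ≤ 3^s1 * M^σ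
  have hLHS : |((k1 * k2 * k3 : ℤ) : ℝ)| ^ (-s) * m4 ^ s1 ≤ 3 ^ s1 * M ^ σ := by
    have hprodabs : |((k1 * k2 * k3 : ℤ) : ℝ)| = m1 * m2 * m3 := by
      rw [hm1d, hm2d, hm3d]; push_cast; rw [abs_mul, abs_mul]
    rw [hprodabs]
    rcases le_or_gt 0 s with hspos|hsneg
    · -- s ≥ 0 case: use L = max of m1 m2 m3
      set L := max (max m1 m2) m3 with hLd
      have hL1 : 1 ≤ L := le_trans hm1 (le_trans (le_max_left _ _) (le_max_left _ _))
      have hL0 : (0:ℝ) < L := lt_of_lt_of_le one_pos hL1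
      have hLM : L ≤ M := by
        rcases max_cases (max m1 m2) m3 with ⟨h', _⟩|⟨h', _⟩ <;> rw [hLd, h']
        · exact le_max_left _ _
        · exact hm3M
      have hLprod : L ≤ m1 * m2 * m3 := by
        rcases max_cases (max m1 m2) m3 with ⟨h', _⟩|⟨h', _⟩ <;> rw [hLd, h']
        · rcases max_cases m1 m2 with ⟨h'', _⟩|⟨h'', _⟩ <;> rw [h'']
          · exact stmt4_le_mul3 m1 m2 m3 (by linarith) hm2 hm3
          · calc m2 ≤ m2 * m1 * m3 := stmt4_le_mul3 m2 m1 m3 (by linarith) hm1 hm3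
            _ = m1 * m2 * m3 := by ring
        · calc m3 ≤ m3 * m1 * m2 := stmt4_le_mul3 m3 m1 m2 (by linarith) hm1 hm2
          _ = m1 * m2 * m3 := by ring
      have h4L : m4 ≤ 3 * L := by
        have : m4 ≤ m1 + m2 + m3 := by
          have e : (k4:ℝ) = -((k1:ℝ) + k2 + k3) := by linarith
          rw [hm4d, e, abs_neg]
          calc |(k1:ℝ) + k2 + k3| ≤ |(k1:ℝ) + k2| + |(k3:ℝ)| := abs_add_le _ _
          _ ≤ m1 + m2 + m3 := by
              rw [hm1d, hm2d, hm3d]; linarith [abs_add_le (k1:ℝ) (k2:ℝ)]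
        have hl1 : m1 ≤ L := le_trans (le_max_left _ _) (le_max_left _ _)
        have hl2 : m2 ≤ L := le_trans (le_max_right _ _) (le_max_left _ _)
        have hl3 : m3 ≤ L := le_max_right _ _
        linarith
      calc (m1 * m2 * m3) ^ (-s) * m4 ^ s1
          ≤ L ^ (-s) * (3*L) ^ s1 := by
            apply mul_le_mul
            · exact Real.rpow_le_rpow_of_nonpos hL0 hLprod (by linarith)
            · exact Real.rpow_le_rpow (by rw [hm4d]; positivity) h4L hs1
            · positivity
            · positivity
      _ = 3 ^ s1 * L ^ (s1 - s) := by
            rw [Real.mul_rpow (by norm_num) (le_of_lt hL0)]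
            rw [show s1 - s = -s + s1 by ring, Real.rpow_add hL0]
            ring
      _ ≤ 3 ^ s1 * M ^ σ := by
            apply mul_le_mul_of_nonneg_left _ (by positivity)
            calc L ^ (s1 - s) ≤ L ^ σ :=
                  Real.rpow_le_rpow_of_exponent_le hL1
                    (le_trans (le_max_left _ _) (le_max_left _ _))
            _ ≤ M ^ σ := Real.rpow_le_rpow (le_of_lt hL0) hLM hσ0
    · -- s < 0
      have hprodM : m1 * m2 * m3 ≤ M * M * M :=
        mul_le_mul (mul_le_mul hm1M hm2M (by linarith) (by linarith))
          hm3M (by linarith) (by positivity)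
      calc (m1 * m2 * m3) ^ (-s) * m4 ^ s1
          ≤ (M*M*M) ^ (-s) * M ^ s1 := by
            apply mul_le_mul
            · exact Real.rpow_le_rpow (by positivity) hprodM (by linarith)
            · exact Real.rpow_le_rpow (by rw [hm4d]; positivity) hm4M hs1
            · positivity
            · positivity
      _ = M ^ (s1 - 3*s) := by
            rw [show M*M*M = M ^ ((3:ℕ):ℝ) by rw [Real.rpow_natCast]; ring]
            rw [← Real.rpow_mul (le_of_lt hM0), ← Real.rpow_add hM0]
            congr 1
            push_cast
            ring
      _ ≤ M ^ σ := Real.rpow_le_rpow_of_exponent_le hM1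
            (le_trans (le_max_right _ _) (le_max_left _ _))
      _ ≤ 3 ^ s1 * M ^ σ :=
            le_mul_of_one_le_left (Real.rpow_nonneg (le_of_lt hM0) σ) h3s1
  -- RHS bound: M^σ ≤ 12 * (m1 * (a*b*c)^α)
  have hRHS : M ^ σ ≤ 12 * (m1 * (a*b*c) ^ α) := by
    have habc0 : (0:ℝ) < a*b*c := by positivity
    have step1 : M ^ σ ≤ M ^ (2*α) := Real.rpow_le_rpow_of_exponent_le hM1 hσ2α
    have step2 : M ^ (2*α) = (M^2) ^ α := by
      rw [show (2:ℝ)*α = ((2:ℕ):ℝ)*α by norm_num, Real.rpow_mul (le_of_lt hM0),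
        Real.rpow_natCast]
    have step3 : (M^2) ^ α ≤ (144 * (m1 * (a*b*c))) ^ α :=
      Real.rpow_le_rpow (by positivity) hkey hα0
    have step4 : (144 * (m1 * (a*b*c))) ^ α = 144 ^ α * (m1 ^ α * (a*b*c) ^ α) := by
      rw [Real.mul_rpow (by norm_num) (by positivity),
        Real.mul_rpow (by linarith : (0:ℝ) ≤ m1) (le_of_lt habc0)]
    have h144 : (144:ℝ) ^ α ≤ 12 := by
      calc (144:ℝ) ^ α ≤ (144:ℝ) ^ (1/2 : ℝ) :=
            Real.rpow_le_rpow_of_exponent_le (by norm_num) (by rw [hαd]; linarith)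
      _ = 12 := by
          rw [show (144:ℝ) = 12 ^ ((2:ℕ):ℝ) by rw [Real.rpow_natCast]; norm_num,
            ← Real.rpow_mul (by norm_num : (0:ℝ) ≤ 12)]
          norm_num
    have hm1α : m1 ^ α ≤ m1 := by
      calc m1 ^ α ≤ m1 ^ (1:ℝ) := Real.rpow_le_rpow_of_exponent_le hm1 hα1
      _ = m1 := Real.rpow_one m1
    calc M ^ σ ≤ 144 ^ α * (m1 ^ α * (a*b*c) ^ α) := by
          rw [← step4]; exact le_trans step1 (le_trans (le_of_eq step2) step3)
    _ ≤ 12 * (m1 * (a*b*c) ^ α) := by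
        have h1 : m1 ^ α * (a*b*c) ^ α ≤ m1 * (a*b*c) ^ α :=
          mul_le_mul_of_nonneg_right hm1α (by positivity)
        have h2 : (0:ℝ) ≤ m1 ^ α * (a*b*c) ^ α := by positivity
        exact mul_le_mul h144 h1 h2 (by norm_num)
  -- combine
  calc |((k1 * k2 * k3 : ℤ) : ℝ)| ^ (-s) * m4 ^ s1 ≤ 3 ^ s1 * M ^ σ := hLHS
  _ ≤ 3 ^ s1 * (12 * (m1 * (a*b*c) ^ α)) := by
      apply mul_le_mul_of_nonneg_left hRHS (by positivity)
  _ = 12 * 3 ^ s1 * m1 * (a*b*c) ^ α := by ring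
end

section
/- Fix real numbers s with -1/2 < s ≤ -1/3 and s1 with s < s1 < 3s + 1. Then there exist constants C > 0 and ε0 > 0 such that for every ε ∈ (0, ε0] and all nonzero integers k1, k2, k3, k4 with k1 + k2 + k3 + k4 = 0 and (k1 + k2)(k1 + k3)(k2 + k3) ≠ 0, one has |k1 k2 k3|^{-s} |k4|^{s1} ≤ C |k1| (|k1 + k2| · |k1 + k3| · |k2 + k3|)^{1/2 - 11ε}. -/
set_option maxHeartbeats 1000000


/-- Case `-1/2 < s ≤ -1/3` of the pointwise multiplier bound (22): for `s < s1 < 3s+1`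
there exist `C > 0` and `ε0 > 0` such that for all `ε ∈ (0, ε0]` and all nonzero integers
`k1, k2, k3, k4` with `k1+k2+k3+k4 = 0` and `(k1+k2)(k1+k3)(k2+k3) ≠ 0`,
`|k1 k2 k3|^{-s} |k4|^{s1} ≤ C |k1| (|k1+k2| |k1+k3| |k2+k3|)^{1/2 - 11ε}`. -/
theorem stmt_5 (s s1 : ℝ) (hs : -1 / 2 < s) (hs' : s ≤ -1 / 3)
    (hs1 : s < s1) (hs1' : s1 < 3 * s + 1) :
    ∃ C > (0 : ℝ), ∃ ε0 > (0 : ℝ), ∀ ε : ℝ, 0 < ε → ε ≤ ε0 →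
      ∀ k1 k2 k3 k4 : ℤ, k1 ≠ 0 → k2 ≠ 0 → k3 ≠ 0 → k4 ≠ 0 →
        k1 + k2 + k3 + k4 = 0 → (k1 + k2) * (k1 + k3) * (k2 + k3) ≠ 0 →
        |((k1 * k2 * k3 : ℤ) : ℝ)| ^ (-s) * |(k4 : ℝ)| ^ s1 ≤
          C * |(k1 : ℝ)| *
            (|((k1 + k2 : ℤ) : ℝ)| * |((k1 + k3 : ℤ) : ℝ)| * |((k2 + k3 : ℤ) : ℝ)|) ^
              (1 / 2 - 11 * ε) := by
  refine ⟨8, by norm_num, (1 / 2 + s) / 11, by linarith, ?_⟩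
  intro ε hε hεle k1 k2 k3 k4 hk1 hk2 hk3 hk4 hsum hprod
  have hk12 : k1 + k2 ≠ 0 := fun h => hprod (by rw [h, zero_mul, zero_mul])
  have hk13 : k1 + k3 ≠ 0 := fun h => hprod (by rw [h, mul_zero, zero_mul])
  have hk23 : k2 + k3 ≠ 0 := fun h => hprod (by rw [h, mul_zero])
  have habs : ∀ n : ℤ, n ≠ 0 → (1 : ℝ) ≤ |(n : ℝ)| := by
    intro n hn
    rw [← Int.cast_abs]
    exact_mod_cast Int.one_le_abs hn
  have habs3 : |((k1 * k2 * k3 : ℤ) : ℝ)| = |(k1 : ℝ)| * |(k2 : ℝ)| * |(k3 : ℝ)| := by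
    push_cast
    rw [abs_mul, abs_mul]
  rw [habs3]
  set p := -s with hp
  set X := |(k1 : ℝ)| with hXdef
  set Y := |(k2 : ℝ)| with hYdef
  set Z := |(k3 : ℝ)| with hZdef
  set M := |(k4 : ℝ)| with hMdef
  set A := |((k1 + k2 : ℤ) : ℝ)| with hAdef
  set B := |((k1 + k3 : ℤ) : ℝ)| with hBdef
  set D := |((k2 + k3 : ℤ) : ℝ)| with hDdef
  have h1X : (1 : ℝ) ≤ X := habs k1 hk1
  have h1Y : (1 : ℝ) ≤ Y := habs k2 hk2
  have h1Z : (1 : ℝ) ≤ Z := habs k3 hk3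
  have h1M : (1 : ℝ) ≤ M := habs k4 hk4
  have h1A : (1 : ℝ) ≤ A := habs _ hk12
  have h1B : (1 : ℝ) ≤ B := habs _ hk13
  have h1D : (1 : ℝ) ≤ D := habs _ hk23
  have h0X : (0 : ℝ) < X := lt_of_lt_of_le one_pos h1X
  have h0M : (0 : ℝ) < M := lt_of_lt_of_le one_pos h1M
  have h0A : (0 : ℝ) ≤ A := by linarith
  have h0B : (0 : ℝ) ≤ B := by linarith
  have h0D : (0 : ℝ) ≤ D := by linarith
  -- exponent facts
  have hp1 : 1 / 3 ≤ p := by rw [hp]; linarith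
  have hp2 : p < 1 / 2 := by rw [hp]; linarith
  have hq0 : 0 ≤ 3 * p - 1 := by linarith
  have he : p ≤ 1 / 2 - 11 * ε := by
    have : 11 * ε ≤ 1 / 2 + s := by linarith
    rw [hp]; linarith
  have hqe : 3 * p - 1 ≤ 1 / 2 - 11 * ε := by linarith
  have hqs : 3 * p - 1 + s1 ≤ 0 := by rw [hp]; linarith
  -- elementary inequalities between the absolute values
  have hYb : Y ≤ 2 * A * X := by
    have t : Y ≤ A + X := by
      have e2 : (k2 : ℝ) = ((k1 + k2 : ℤ) : ℝ) - (k1 : ℝ) := by push_cast; ring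
      calc Y = |((k1 + k2 : ℤ) : ℝ) - (k1 : ℝ)| := by rw [hYdef, ← e2]
        _ ≤ A + X := abs_sub _ _
    nlinarith [mul_nonneg (by linarith : (0:ℝ) ≤ A - 1) (by linarith : (0:ℝ) ≤ X - 1)]
  have hZb : Z ≤ 2 * B * X := by
    have t : Z ≤ B + X := by
      have e2 : (k3 : ℝ) = ((k1 + k3 : ℤ) : ℝ) - (k1 : ℝ) := by push_cast; ring
      calc Z = |((k1 + k3 : ℤ) : ℝ) - (k1 : ℝ)| := by rw [hZdef, ← e2]
        _ ≤ B + X := abs_sub _ _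
    nlinarith [mul_nonneg (by linarith : (0:ℝ) ≤ B - 1) (by linarith : (0:ℝ) ≤ X - 1)]
  have hXb : X ≤ 2 * D * M := by
    have t : X ≤ D + M := by
      have hsR : (k1 : ℝ) + (k2 : ℝ) + (k3 : ℝ) + (k4 : ℝ) = 0 := by exact_mod_cast hsum
      have e2 : (k1 : ℝ) = (-((k2 + k3 : ℤ) : ℝ)) - (k4 : ℝ) := by push_cast; linarith
      calc X = |(-((k2 + k3 : ℤ) : ℝ)) - (k4 : ℝ)| := by rw [hXdef, ← e2]
        _ ≤ |(-((k2 + k3 : ℤ) : ℝ))| + M := abs_sub _ _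
        _ = D + M := by rw [abs_neg]
    nlinarith [mul_nonneg (by linarith : (0:ℝ) ≤ D - 1) (by linarith : (0:ℝ) ≤ M - 1)]
  -- main chain
  have step1 : (X * Y * Z) ^ p * M ^ s1 ≤ (X * (2 * A * X) * (2 * B * X)) ^ p * M ^ s1 := by
    have hb : X * Y * Z ≤ X * (2 * A * X) * (2 * B * X) := by
      have h1 : X * Y ≤ X * (2 * A * X) := by
        apply mul_le_mul_of_nonneg_left hYb (by linarith)
      have h2 : X * Y * Z ≤ X * (2 * A * X) * (2 * B * X) :=
        mul_le_mul h1 hZb (by linarith) (by positivity)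
      exact h2
    exact mul_le_mul_of_nonneg_right
      (Real.rpow_le_rpow (by positivity) hb (by linarith))
      (Real.rpow_nonneg (abs_nonneg _) _)
  have expand : (X * (2 * A * X) * (2 * B * X)) ^ p
      = 2 ^ p * 2 ^ p * (A ^ p * B ^ p) * (X ^ p * X ^ p * X ^ p) := by
    rw [show X * (2 * A * X) * (2 * B * X) = 2 * (2 * (A * (B * (X * (X * X))))) by ring]
    rw [Real.mul_rpow (by norm_num) (by positivity),
      Real.mul_rpow (by norm_num) (by positivity),
      Real.mul_rpow h0A (by positivity),
      Real.mul_rpow h0B (by positivity),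
      Real.mul_rpow (le_of_lt h0X) (by positivity),
      Real.mul_rpow (le_of_lt h0X) (le_of_lt h0X)]
    ring
  have hX3 : X ^ p * X ^ p * X ^ p = X * X ^ (3 * p - 1) := by
    rw [← Real.rpow_add h0X, ← Real.rpow_add h0X,
      show p + p + p = 1 + (3 * p - 1) by ring, Real.rpow_add h0X, Real.rpow_one]
  have hXq : X ^ (3 * p - 1) ≤ 2 ^ (3 * p - 1) * D ^ (3 * p - 1) * M ^ (3 * p - 1) := by
    calc X ^ (3 * p - 1) ≤ (2 * D * M) ^ (3 * p - 1) :=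
          Real.rpow_le_rpow (abs_nonneg _) hXb hq0
      _ = 2 ^ (3 * p - 1) * D ^ (3 * p - 1) * M ^ (3 * p - 1) := by
          rw [Real.mul_rpow (by positivity) (le_of_lt h0M),
            Real.mul_rpow (by norm_num) h0D]
  have hMq : M ^ (3 * p - 1) * M ^ s1 = M ^ (3 * p - 1 + s1) :=
    (Real.rpow_add h0M _ _).symm
  have hM1 : M ^ (3 * p - 1 + s1) ≤ 1 :=
    Real.rpow_le_one_of_one_le_of_nonpos h1M hqs
  have h2p : (2 : ℝ) ^ p ≤ 2 := by
    calc (2 : ℝ) ^ p ≤ 2 ^ (1 : ℝ) :=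
          Real.rpow_le_rpow_of_exponent_le (by norm_num) (by linarith)
      _ = 2 := Real.rpow_one 2
  have h2q : (2 : ℝ) ^ (3 * p - 1) ≤ 2 := by
    calc (2 : ℝ) ^ (3 * p - 1) ≤ 2 ^ (1 : ℝ) :=
          Real.rpow_le_rpow_of_exponent_le (by norm_num) (by linarith)
      _ = 2 := Real.rpow_one 2
  have hAe : A ^ p ≤ A ^ (1 / 2 - 11 * ε) := Real.rpow_le_rpow_of_exponent_le h1A he
  have hBe : B ^ p ≤ B ^ (1 / 2 - 11 * ε) := Real.rpow_le_rpow_of_exponent_le h1B he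
  have hDe : D ^ (3 * p - 1) ≤ D ^ (1 / 2 - 11 * ε) :=
    Real.rpow_le_rpow_of_exponent_le h1D hqe
  have h2p0 : (0 : ℝ) ≤ (2 : ℝ) ^ p := Real.rpow_nonneg (by norm_num) _
  have h2q0 : (0 : ℝ) ≤ (2 : ℝ) ^ (3 * p - 1) := Real.rpow_nonneg (by norm_num) _
  have c8 : (2 : ℝ) ^ p * 2 ^ p * 2 ^ (3 * p - 1) ≤ 8 := by nlinarith
  calc (X * Y * Z) ^ p * M ^ s1
      ≤ (X * (2 * A * X) * (2 * B * X)) ^ p * M ^ s1 := step1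
    _ = 2 ^ p * 2 ^ p * (A ^ p * B ^ p) * (X * X ^ (3 * p - 1)) * M ^ s1 := by
        rw [expand, hX3]
    _ ≤ 2 ^ p * 2 ^ p * (A ^ p * B ^ p) *
          (X * (2 ^ (3 * p - 1) * D ^ (3 * p - 1) * M ^ (3 * p - 1))) * M ^ s1 := by
        gcongr
    _ = (2 ^ p * 2 ^ p * 2 ^ (3 * p - 1)) * X * (A ^ p * B ^ p * D ^ (3 * p - 1)) *
          (M ^ (3 * p - 1) * M ^ s1) := by ring
    _ = (2 ^ p * 2 ^ p * 2 ^ (3 * p - 1)) * X * (A ^ p * B ^ p * D ^ (3 * p - 1)) *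
          M ^ (3 * p - 1 + s1) := by rw [hMq]
    _ ≤ 8 * X * (A ^ (1 / 2 - 11 * ε) * B ^ (1 / 2 - 11 * ε) * D ^ (1 / 2 - 11 * ε)) * 1 := by
        gcongr
    _ = 8 * X * (A * B * D) ^ (1 / 2 - 11 * ε) := by
        rw [Real.mul_rpow (mul_nonneg h0A h0B) h0D, Real.mul_rpow h0A h0B, mul_one]
end

section
/- Fix real numbers s > -1/2 and s1 < min(3s + 1, s + 1). Then there exist constants C > 0 and ε0 > 0 such that for every ε ∈ (0, ε0] and all nonzero integers k1, k2, k3, k4 with k1 + k2 + k3 + k4 = 0 and (k1 + k2)(k1 + k3)(k2 + k3) ≠ 0, one has |k1 k2 k3|^{-s} |k4|^{s1} |k1 k2 k3 k4|^{ε} ≤ C |k1| (|k1 + k2| · |k1 + k3| · |k2 + k3|)^{1/2 - 7ε}. -/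
set_option maxHeartbeats 1000000

private lemma one_le_rpow' {x y : ℝ} (hx : 1 ≤ x) (hy : 0 ≤ y) : 1 ≤ x ^ y := by
  simpa using Real.rpow_le_rpow_of_exponent_le hx hy

private lemma le_half_rpow {m P : ℝ} (hm : 0 ≤ m) (h : m ^ 2 ≤ P) : m ≤ P ^ ((1:ℝ)/2) := by
  have h1 : Real.sqrt (m^2) ≤ Real.sqrt P := Real.sqrt_le_sqrt h
  rw [Real.sqrt_sq hm] at h1
  rwa [Real.sqrt_eq_rpow] at h1

private lemma abstract_core (s s1 : ℝ) (hs : -1 / 2 < s) (hs1 : s1 < min (3 * s + 1) (s + 1))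
    (a1 a2 a3 a4 m P : ℝ)
    (h1 : 1 ≤ a1) (h2 : 1 ≤ a2) (h3 : 1 ≤ a3) (h4 : 1 ≤ a4)
    (hm : 1 ≤ m) (hP : 1 ≤ P)
    (hm2 : m ^ 2 ≤ P)
    (hb2 : a2 ≤ 4 * a1 * m) (hb3 : a3 ≤ 4 * a1 * m) (hb4 : a4 ≤ 4 * a1 * m)
    (hP4 : a4 ≤ 3 / 2 * P) (h34 : a4 ≤ 3 * (a1 * a2 * a3))
    (hd : a2 * a3 ≤ 2 * (a1 * a4) ∨ a2 * a3 ≤ 2 * P) :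
    (a1 * a2 * a3) ^ (-s) * a4 ^ s1 ≤ 4 * 3 ^ (max s 0) * a1 * P ^ ((1:ℝ)/2) := by
  have ha1 : (0:ℝ) < a1 := lt_of_lt_of_le one_pos h1
  have ha2 : (0:ℝ) < a2 := lt_of_lt_of_le one_pos h2
  have ha3 : (0:ℝ) < a3 := lt_of_lt_of_le one_pos h3
  have ha4 : (0:ℝ) < a4 := lt_of_lt_of_le one_pos h4
  have hm0 : (0:ℝ) < m := lt_of_lt_of_le one_pos hm
  have hP0 : (0:ℝ) < P := lt_of_lt_of_le one_pos hP
  have h12 : (1:ℝ) ≤ a1 * a2 := by nlinarith [mul_le_mul h1 h2 zero_le_one ha1.le]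
  have hX1 : (1:ℝ) ≤ a1 * a2 * a3 := by nlinarith [mul_le_mul h12 h3 zero_le_one (by positivity : (0:ℝ) ≤ a1*a2)]
  have hX0 : (0:ℝ) < a1 * a2 * a3 := lt_of_lt_of_le one_pos hX1
  have hPh : (1:ℝ) ≤ P ^ ((1:ℝ)/2) := one_le_rpow' hP (by norm_num)
  have hPh0 : (0:ℝ) < P ^ ((1:ℝ)/2) := lt_of_lt_of_le one_pos hPh
  have hmP : m ≤ P ^ ((1:ℝ)/2) := le_half_rpow hm0.le hm2
  rcases le_total s 0 with hsneg | hspos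
  · -- s ≤ 0 : constant is 4 * 3^0 = 4
    have hmax : max s 0 = 0 := max_eq_right hsneg
    rw [hmax, Real.rpow_zero, mul_one]
    set σ : ℝ := -s with hσdef
    have hσ0 : 0 ≤ σ := by simp [hσdef]; linarith
    have hσh : σ < 1/2 := by simp [hσdef]; linarith
    have hXσ : (a1 * a2 * a3) ^ (-s) = (a1*a2*a3) ^ σ := by rw [hσdef]
    rcases le_or_gt s1 0 with hs1neg | hs1pos
    · -- case 3 : s ≤ 0, s1 ≤ 0
      have h4s1 : a4 ^ s1 ≤ 1 := Real.rpow_le_one_of_one_le_of_nonpos h4 hs1neg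
      have key : (a1*a2*a3) ^ σ ≤ 4 * a1 * P ^ ((1:ℝ)/2) := by
        rcases hd with hd1 | hd2
        · have hX : a1 * a2 * a3 ≤ 3 * (a1 * (a1 * P)) := by nlinarith [mul_le_mul_of_nonneg_left hd1 ha1.le, mul_le_mul_of_nonneg_left hP4 (by positivity : (0:ℝ) ≤ 2*(a1*a1))]
          calc (a1*a2*a3) ^ σ ≤ (3 * (a1 * (a1 * P))) ^ σ :=
                Real.rpow_le_rpow hX0.le hX hσ0
          _ = 3 ^ σ * (a1 ^ σ * (a1 ^ σ * P ^ σ)) := by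
                rw [Real.mul_rpow (by norm_num) (by positivity),
                  Real.mul_rpow ha1.le (by positivity), Real.mul_rpow ha1.le hP0.le]
          _ ≤ 3 * (a1 ^ σ * (a1 ^ σ * P ^ ((1:ℝ)/2))) := by
                have h3 : (3:ℝ) ^ σ ≤ 3 ^ (1:ℝ) :=
                  Real.rpow_le_rpow_of_exponent_le (by norm_num) (by linarith)
                rw [Real.rpow_one] at h3
                have hPσ : P ^ σ ≤ P ^ ((1:ℝ)/2) :=
                  Real.rpow_le_rpow_of_exponent_le hP (by linarith)
                gcongr
          _ = 3 * (a1 ^ (σ + σ) * P ^ ((1:ℝ)/2)) := by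
                rw [Real.rpow_add ha1]; ring
          _ ≤ 3 * (a1 * P ^ ((1:ℝ)/2)) := by
                have : a1 ^ (σ + σ) ≤ a1 ^ (1:ℝ) :=
                  Real.rpow_le_rpow_of_exponent_le h1 (by linarith)
                rw [Real.rpow_one] at this
                gcongr
          _ ≤ 4 * a1 * P ^ ((1:ℝ)/2) := by nlinarith
        · have hX : a1 * a2 * a3 ≤ 2 * (a1 * P) := by nlinarith [mul_le_mul_of_nonneg_left hd2 ha1.le]
          calc (a1*a2*a3) ^ σ ≤ (2 * (a1 * P)) ^ σ :=
                Real.rpow_le_rpow hX0.le hX hσ0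
          _ = 2 ^ σ * (a1 ^ σ * P ^ σ) := by
                rw [Real.mul_rpow (by norm_num) (by positivity), Real.mul_rpow ha1.le hP0.le]
          _ ≤ 2 * (a1 * P ^ ((1:ℝ)/2)) := by
                have h2' : (2:ℝ) ^ σ ≤ 2 ^ (1:ℝ) :=
                  Real.rpow_le_rpow_of_exponent_le (by norm_num) (by linarith)
                rw [Real.rpow_one] at h2'
                have ha1' : a1 ^ σ ≤ a1 ^ (1:ℝ) :=
                  Real.rpow_le_rpow_of_exponent_le h1 (by linarith)
                rw [Real.rpow_one] at ha1'
                have hPσ : P ^ σ ≤ P ^ ((1:ℝ)/2) :=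
                  Real.rpow_le_rpow_of_exponent_le hP (by linarith)
                gcongr
          _ ≤ 4 * a1 * P ^ ((1:ℝ)/2) := by nlinarith
      calc (a1 * a2 * a3) ^ (-s) * a4 ^ s1 ≤ (a1*a2*a3) ^ σ * 1 := by
            rw [hXσ]; gcongr
      _ = (a1*a2*a3) ^ σ := mul_one _
      _ ≤ 4 * a1 * P ^ ((1:ℝ)/2) := key
    · -- case 4 : s ≤ 0, 0 < s1
      have hs1' : s1 < 3 * s + 1 := lt_of_lt_of_le hs1 (min_le_left _ _)
      have hE1 : 2 * σ + s1 ≤ 1 := by simp only [hσdef] at *; linarith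
      have hE0 : 0 ≤ 2 * σ + s1 := by positivity
      have h4m : (0:ℝ) < 4 * a1 * m := by positivity
      have hsplit : (a1*a2*a3) ^ σ * a4 ^ s1 = a1 ^ σ * (a2 ^ σ * a3 ^ σ * a4 ^ s1) := by
        rw [Real.mul_rpow (by positivity) ha3.le, Real.mul_rpow ha1.le ha2.le]; ring
      have hb2' : a2 ^ σ ≤ (4*a1*m) ^ σ := Real.rpow_le_rpow ha2.le hb2 hσ0
      have hb3' : a3 ^ σ ≤ (4*a1*m) ^ σ := Real.rpow_le_rpow ha3.le hb3 hσ0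
      have hb4' : a4 ^ s1 ≤ (4*a1*m) ^ s1 := Real.rpow_le_rpow ha4.le hb4 hs1pos.le
      have hcomb : a2 ^ σ * a3 ^ σ * a4 ^ s1 ≤ (4*a1*m) ^ (2*σ + s1) := by
        have : (4*a1*m) ^ (2*σ + s1) = (4*a1*m) ^ σ * (4*a1*m) ^ σ * (4*a1*m) ^ s1 := by
          rw [show 2*σ + s1 = σ + (σ + s1) by ring, Real.rpow_add h4m, Real.rpow_add h4m]
          ring
        rw [this]
        gcongr <;> first | positivity | skip
      have hexp : (4*a1*m) ^ (2*σ+s1) = 4 ^ (2*σ+s1) * (a1 ^ (2*σ+s1) * m ^ (2*σ+s1)) := by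
        rw [Real.mul_rpow (by positivity) hm0.le, Real.mul_rpow (by norm_num) ha1.le, mul_assoc]
      have h4e : (4:ℝ) ^ (2*σ+s1) ≤ 4 := by
        have := Real.rpow_le_rpow_of_exponent_le (x := (4:ℝ)) (by norm_num) hE1
        rwa [Real.rpow_one] at this
      have hme : m ^ (2*σ+s1) ≤ P ^ ((1:ℝ)/2) := by
        have h' : m ^ (2*σ+s1) ≤ m ^ (1:ℝ) := Real.rpow_le_rpow_of_exponent_le hm hE1
        rw [Real.rpow_one] at h'
        exact h'.trans hmP
      have ha1e : a1 ^ σ * a1 ^ (2*σ+s1) ≤ a1 := by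
        rw [← Real.rpow_add ha1]
        have : a1 ^ (σ + (2*σ+s1)) ≤ a1 ^ (1:ℝ) := by
          apply Real.rpow_le_rpow_of_exponent_le h1
          simp only [hσdef] at *; linarith
        rwa [Real.rpow_one] at this
      calc (a1 * a2 * a3) ^ (-s) * a4 ^ s1
          = a1 ^ σ * (a2 ^ σ * a3 ^ σ * a4 ^ s1) := by rw [hXσ, hsplit]
      _ ≤ a1 ^ σ * (4*a1*m) ^ (2*σ+s1) := by
            have := Real.rpow_pos_of_pos ha1 σ
            gcongr
      _ = 4 ^ (2*σ+s1) * ((a1 ^ σ * a1 ^ (2*σ+s1)) * m ^ (2*σ+s1)) := by rw [hexp]; ring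
      _ ≤ 4 * (a1 * P ^ ((1:ℝ)/2)) := by
            apply mul_le_mul h4e _ (by positivity) (by norm_num)
            apply mul_le_mul ha1e hme (by positivity) (by linarith)
      _ = 4 * a1 * P ^ ((1:ℝ)/2) := by ring
  · -- 0 ≤ s
    have hmax : max s 0 = s := max_eq_left hspos
    rw [hmax]
    have hs1'' : s1 < s + 1 := lt_of_lt_of_le hs1 (min_le_right _ _)
    have h3s : (0:ℝ) < 3 ^ s := Real.rpow_pos_of_pos (by norm_num) s
    have hXs : (0:ℝ) < (a1*a2*a3) ^ s := Real.rpow_pos_of_pos hX0 s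
    have hXneg : (a1*a2*a3) ^ (-s) = ((a1*a2*a3) ^ s)⁻¹ := Real.rpow_neg hX0.le s
    have h4s : a4 ^ s ≤ 3 ^ s * (a1*a2*a3) ^ s := by
      rw [← Real.mul_rpow (by norm_num) hX0.le]
      exact Real.rpow_le_rpow ha4.le h34 hspos
    rcases le_or_gt s1 s with hc | hc
    · -- s1 ≤ s
      have h41 : a4 ^ s1 ≤ a4 ^ s := Real.rpow_le_rpow_of_exponent_le h4 hc
      calc (a1*a2*a3) ^ (-s) * a4 ^ s1
          ≤ (a1*a2*a3) ^ (-s) * (3 ^ s * (a1*a2*a3) ^ s) := by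
            have := (Real.rpow_pos_of_pos hX0 (-s)).le
            gcongr
            exact h41.trans h4s
      _ = ((a1*a2*a3) ^ (-s) * (a1*a2*a3) ^ s) * 3 ^ s := by ring
      _ = 3 ^ s := by
            rw [← Real.rpow_add hX0]; simp
      _ ≤ 4 * 3 ^ s * a1 * P ^ ((1:ℝ)/2) := by
            nlinarith [mul_le_mul_of_nonneg_left (mul_le_mul h1 hPh zero_le_one ha1.le) h3s.le]
    · -- s < s1
      have hsplit : a4 ^ s1 = a4 ^ s * a4 ^ (s1 - s) := by
        rw [← Real.rpow_add ha4, add_sub_cancel]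
      have htail : a4 ^ (s1 - s) ≤ 4 * (a1 * P ^ ((1:ℝ)/2)) := by
        have h0 : (0:ℝ) ≤ s1 - s := by linarith
        have h1' : s1 - s ≤ 1 := by linarith
        have hb : a4 ^ (s1-s) ≤ (4*a1*m) ^ (s1-s) := Real.rpow_le_rpow ha4.le hb4 h0
        have hE : (4*a1*m) ^ (s1-s) = 4 ^ (s1-s) * (a1 ^ (s1-s) * m ^ (s1-s)) := by
          rw [Real.mul_rpow (by positivity) hm0.le, Real.mul_rpow (by norm_num) ha1.le, mul_assoc]
        have h4e : (4:ℝ) ^ (s1-s) ≤ 4 := by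
          have := Real.rpow_le_rpow_of_exponent_le (x := (4:ℝ)) (by norm_num) h1'
          rwa [Real.rpow_one] at this
        have ha1e : a1 ^ (s1-s) ≤ a1 := by
          have := Real.rpow_le_rpow_of_exponent_le h1 h1'
          rwa [Real.rpow_one] at this
        have hme : m ^ (s1-s) ≤ P ^ ((1:ℝ)/2) := by
          have h' : m ^ (s1-s) ≤ m ^ (1:ℝ) := Real.rpow_le_rpow_of_exponent_le hm h1'
          rw [Real.rpow_one] at h'
          exact h'.trans hmP
        calc a4 ^ (s1-s) ≤ 4 ^ (s1-s) * (a1 ^ (s1-s) * m ^ (s1-s)) := by rw [← hE]; exact hb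
        _ ≤ 4 * (a1 * P ^ ((1:ℝ)/2)) := by
            apply mul_le_mul h4e _ (by positivity) (by norm_num)
            apply mul_le_mul ha1e hme (by positivity) (by linarith)
      calc (a1*a2*a3) ^ (-s) * a4 ^ s1
          = (a1*a2*a3) ^ (-s) * (a4 ^ s * a4 ^ (s1-s)) := by rw [hsplit]
      _ ≤ (a1*a2*a3) ^ (-s) * ((3 ^ s * (a1*a2*a3) ^ s) * (4 * (a1 * P ^ ((1:ℝ)/2)))) := by
            have := (Real.rpow_pos_of_pos hX0 (-s)).le
            gcongr
      _ = ((a1*a2*a3) ^ (-s) * (a1*a2*a3) ^ s) * (3 ^ s * 4 * a1 * P ^ ((1:ℝ)/2)) := by ring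
      _ = 1 * (3 ^ s * 4 * a1 * P ^ ((1:ℝ)/2)) := by
            rw [← Real.rpow_add hX0, neg_add_cancel, Real.rpow_zero]
      _ = 4 * 3 ^ s * a1 * P ^ ((1:ℝ)/2) := by ring

private lemma sq3 (m M t : ℝ) (h0 : 0 ≤ m) (hM : m ≤ M) (ht : 1 ≤ t) : m ^ 2 ≤ t * (m * M) := by
  have h1 : m ^ 2 ≤ m * M := by nlinarith
  have h2 : m * M ≤ t * (m * M) := le_mul_of_one_le_left (by nlinarith) ht
  linarith

private lemma mk_m (A1 A2 A3 A4 u v w : ℝ)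
    (h1 : 1 ≤ A1) (h2 : 1 ≤ A2) (h3 : 1 ≤ A3) (h4 : 1 ≤ A4)
    (hu : 1 ≤ u) (hv : 1 ≤ v) (hw : 1 ≤ w)
    (t2 : A2 ≤ A1 + u) (t3 : A3 ≤ A1 + v) (t32 : A3 ≤ A2 + w) (t23 : A2 ≤ A3 + w)
    (t4pq : A4 ≤ A1 + u + v) (t4pr : A4 ≤ A2 + u + w) (t4qr : A4 ≤ A3 + v + w) :
    ∃ m : ℝ, 1 ≤ m ∧ m ^ 2 ≤ u * (v * w) ∧ A2 ≤ 4 * A1 * m ∧ A3 ≤ 4 * A1 * m ∧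
      A4 ≤ 4 * A1 * m := by
  rcases le_total u v with hc1 | hc1
  · rcases le_total v w with hc2 | hc2
    · -- w max, m = v
      refine ⟨v, hv, ?_, by nlinarith, by nlinarith, by nlinarith⟩
      calc v ^ 2 ≤ u * (v * w) := sq3 v w u (by linarith) hc2 hu
      _ = u * (v * w) := by ring
    · rcases le_total u w with hc3 | hc3
      · -- v max, m = w
        refine ⟨w, hw, ?_, by nlinarith, by nlinarith, by nlinarith⟩
        calc w ^ 2 ≤ u * (w * v) := sq3 w v u (by linarith) hc2 hu
        _ = u * (v * w) := by ring
      · -- v max, m = u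
        refine ⟨u, hu, ?_, by nlinarith, by nlinarith, by nlinarith⟩
        calc u ^ 2 ≤ w * (u * v) := sq3 u v w (by linarith) hc1 hw
        _ = u * (v * w) := by ring
  · rcases le_total u w with hc2 | hc2
    · -- w max, m = u
      refine ⟨u, hu, ?_, by nlinarith, by nlinarith, by nlinarith⟩
      calc u ^ 2 ≤ v * (u * w) := sq3 u w v (by linarith) hc2 hv
      _ = u * (v * w) := by ring
    · rcases le_total v w with hc3 | hc3
      · -- u max, m = w
        refine ⟨w, hw, ?_, by nlinarith, by nlinarith, by nlinarith⟩
        calc w ^ 2 ≤ v * (w * u) := sq3 w u v (by linarith) hc2 hv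
        _ = u * (v * w) := by ring
      · -- u max, m = v
        refine ⟨v, hv, ?_, by nlinarith, by nlinarith, by nlinarith⟩
        calc v ^ 2 ≤ w * (v * u) := sq3 v u w (by linarith) hc1 hw
        _ = u * (v * w) := by ring

private lemma helper_facts (u v w : ℝ) (hu : 1 ≤ u) (hv : 1 ≤ v) (hw : 1 ≤ w) :
    1 ≤ u * (v * w) ∧ u ≤ u * (v * w) ∧ v ≤ u * (v * w) ∧ w ≤ u * (v * w) := by
  have h0u : (0:ℝ) ≤ u := by linarith
  have h0v : (0:ℝ) ≤ v := by linarith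
  have h0w : (0:ℝ) ≤ w := by linarith
  have hvw : 1 ≤ v * w := by nlinarith
  have hu' : u ≤ u * (v * w) := le_mul_of_one_le_right h0u hvw
  have hv' : v ≤ u * (v * w) := by
    have a : v ≤ v * w := le_mul_of_one_le_right h0v hw
    have b : v * w ≤ u * (v * w) := le_mul_of_one_le_left (by positivity) hu
    linarith
  have hw' : w ≤ u * (v * w) := by
    have a : w ≤ v * w := le_mul_of_one_le_left h0w hv
    have b : v * w ≤ u * (v * w) := le_mul_of_one_le_left (by positivity) hu
    linarith
  exact ⟨by linarith, hu', hv', hw'⟩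

private lemma helper_P4 (A4 u v w : ℝ) (hu : 1 ≤ u) (hv : 1 ≤ v) (hw : 1 ≤ w)
    (h : 2 * A4 ≤ u + v + w) : A4 ≤ 3 / 2 * (u * (v * w)) := by
  obtain ⟨-, hu', hv', hw'⟩ := helper_facts u v w hu hv hw
  linarith

private lemma helper_h34 (A1 A2 A3 A4 : ℝ) (h1 : 1 ≤ A1) (h2 : 1 ≤ A2) (h3 : 1 ≤ A3)
    (h : A4 ≤ A1 + A2 + A3) : A4 ≤ 3 * (A1 * A2 * A3) := by
  obtain ⟨-, h1', h2', h3'⟩ := helper_facts A1 A2 A3 h1 h2 h3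
  have e : A1 * (A2 * A3) = A1 * A2 * A3 := by ring
  rw [e] at h1' h2' h3'
  linarith

private lemma helper_hd (A1 A2 A3 A4 u v w : ℝ) (hu : 1 ≤ u) (hv : 1 ≤ v) (hw : 1 ≤ w)
    (h1 : 0 ≤ A1) (h4 : 0 ≤ A4)
    (hlow : A2 * A3 - A1 * A4 ≤ u * v) :
    A2 * A3 ≤ 2 * (A1 * A4) ∨ A2 * A3 ≤ 2 * (u * (v * w)) := by
  rcases le_or_gt (A2 * A3) (2 * (A1 * A4)) with h | h
  · exact Or.inl h
  · right
    have huv : (0:ℝ) ≤ u * v := by positivity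
    have a : u * v ≤ u * v * w := le_mul_of_one_le_right huv hw
    have e : u * v * w = u * (v * w) := by ring
    rw [e] at a
    nlinarith

private lemma core_int (s s1 : ℝ)
    (hcore : ∀ a1 a2 a3 a4 m P : ℝ,
      1 ≤ a1 → 1 ≤ a2 → 1 ≤ a3 → 1 ≤ a4 → 1 ≤ m → 1 ≤ P → m ^ 2 ≤ P →
      a2 ≤ 4 * a1 * m → a3 ≤ 4 * a1 * m → a4 ≤ 4 * a1 * m →
      a4 ≤ 3 / 2 * P → a4 ≤ 3 * (a1 * a2 * a3) →
      (a2 * a3 ≤ 2 * (a1 * a4) ∨ a2 * a3 ≤ 2 * P) →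
      (a1 * a2 * a3) ^ (-s) * a4 ^ s1 ≤ 4 * 3 ^ (max s 0) * a1 * P ^ ((1:ℝ)/2)) :
    ∀ k1 k2 k3 k4 : ℤ, k1 ≠ 0 → k2 ≠ 0 → k3 ≠ 0 → k4 ≠ 0 →
      k1 + k2 + k3 + k4 = 0 → (k1 + k2) * (k1 + k3) * (k2 + k3) ≠ 0 →
      |((k1 * k2 * k3 : ℤ) : ℝ)| ^ (-s) * |(k4 : ℝ)| ^ s1 ≤
        4 * 3 ^ (max s 0) * |(k1 : ℝ)| *
          (|((k1 + k2 : ℤ) : ℝ)| * |((k1 + k3 : ℤ) : ℝ)| * |((k2 + k3 : ℤ) : ℝ)|) ^ ((1:ℝ)/2) := by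
  intro k1 k2 k3 k4 hk1 hk2 hk3 hk4 hsum hprod
  have hone : ∀ k : ℤ, k ≠ 0 → (1:ℝ) ≤ |(k:ℝ)| := by
    intro k hk
    have : (1:ℤ) ≤ |k| := Int.one_le_abs hk
    calc (1:ℝ) ≤ ((|k| : ℤ) : ℝ) := by exact_mod_cast this
    _ = |(k:ℝ)| := by push_cast; ring
  have hp0 : k1 + k2 ≠ 0 := fun h => hprod (by rw [h]; ring)
  have hq0 : k1 + k3 ≠ 0 := fun h => hprod (by rw [h]; ring)
  have hr0 : k2 + k3 ≠ 0 := fun h => hprod (by rw [h]; ring)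
  have h1 : (1:ℝ) ≤ |(k1:ℝ)| := hone k1 hk1
  have h2 : (1:ℝ) ≤ |(k2:ℝ)| := hone k2 hk2
  have h3 : (1:ℝ) ≤ |(k3:ℝ)| := hone k3 hk3
  have h4 : (1:ℝ) ≤ |(k4:ℝ)| := hone k4 hk4
  have hsR : (k1:ℝ) + k2 + k3 + k4 = 0 := by exact_mod_cast congrArg (Int.cast : ℤ → ℝ) hsum
  have hPp : |((k1 + k2 : ℤ) : ℝ)| = |(k1:ℝ) + k2| := by push_cast; rfl
  have hPq : |((k1 + k3 : ℤ) : ℝ)| = |(k1:ℝ) + k3| := by push_cast; rfl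
  have hPr : |((k2 + k3 : ℤ) : ℝ)| = |(k2:ℝ) + k3| := by push_cast; rfl
  have hXcast : |((k1 * k2 * k3 : ℤ) : ℝ)| = |(k1:ℝ)| * |(k2:ℝ)| * |(k3:ℝ)| := by
    push_cast; rw [abs_mul, abs_mul]
  have hp1 : (1:ℝ) ≤ |(k1:ℝ) + k2| := by rw [← hPp]; exact hone _ hp0
  have hq1 : (1:ℝ) ≤ |(k1:ℝ) + k3| := by rw [← hPq]; exact hone _ hq0
  have hr1 : (1:ℝ) ≤ |(k2:ℝ) + k3| := by rw [← hPr]; exact hone _ hr0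
  have hP1 : (1:ℝ) ≤ |(k1:ℝ)+k2| * (|(k1:ℝ)+k3| * |(k2:ℝ)+k3|) :=
    (helper_facts _ _ _ hp1 hq1 hr1).1
  have t2 : |(k2:ℝ)| ≤ |(k1:ℝ)| + |(k1:ℝ) + k2| := by
    calc |(k2:ℝ)| = |((k1:ℝ)+k2) - k1| := by ring_nf
    _ ≤ |(k1:ℝ)+k2| + |(k1:ℝ)| := abs_sub _ _
    _ = |(k1:ℝ)| + |(k1:ℝ)+k2| := by ring
  have t3 : |(k3:ℝ)| ≤ |(k1:ℝ)| + |(k1:ℝ) + k3| := by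
    calc |(k3:ℝ)| = |((k1:ℝ)+k3) - k1| := by ring_nf
    _ ≤ |(k1:ℝ)+k3| + |(k1:ℝ)| := abs_sub _ _
    _ = |(k1:ℝ)| + |(k1:ℝ)+k3| := by ring
  have t32 : |(k3:ℝ)| ≤ |(k2:ℝ)| + |(k2:ℝ) + k3| := by
    calc |(k3:ℝ)| = |((k2:ℝ)+k3) - k2| := by ring_nf
    _ ≤ |(k2:ℝ)+k3| + |(k2:ℝ)| := abs_sub _ _
    _ = |(k2:ℝ)| + |(k2:ℝ)+k3| := by ring
  have t23 : |(k2:ℝ)| ≤ |(k3:ℝ)| + |(k2:ℝ) + k3| := by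
    calc |(k2:ℝ)| = |((k2:ℝ)+k3) - k3| := by ring_nf
    _ ≤ |(k2:ℝ)+k3| + |(k3:ℝ)| := abs_sub _ _
    _ = |(k3:ℝ)| + |(k2:ℝ)+k3| := by ring
  have t4pq : |(k4:ℝ)| ≤ |(k1:ℝ)| + |(k1:ℝ)+k2| + |(k1:ℝ)+k3| := by
    calc |(k4:ℝ)| = |(k1:ℝ) - (((k1:ℝ)+k2) + ((k1:ℝ)+k3))| := by
          rw [show (k1:ℝ) - (((k1:ℝ)+k2)+((k1:ℝ)+k3)) = (k4:ℝ) by linarith]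
    _ ≤ |(k1:ℝ)| + |((k1:ℝ)+k2)+((k1:ℝ)+k3)| := abs_sub _ _
    _ ≤ |(k1:ℝ)| + (|(k1:ℝ)+k2| + |(k1:ℝ)+k3|) := by gcongr; exact abs_add_le _ _
    _ = |(k1:ℝ)| + |(k1:ℝ)+k2| + |(k1:ℝ)+k3| := by ring
  have t4pr : |(k4:ℝ)| ≤ |(k2:ℝ)| + |(k1:ℝ)+k2| + |(k2:ℝ)+k3| := by
    calc |(k4:ℝ)| = |(k2:ℝ) - (((k1:ℝ)+k2) + ((k2:ℝ)+k3))| := by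
          rw [show (k2:ℝ) - (((k1:ℝ)+k2)+((k2:ℝ)+k3)) = (k4:ℝ) by linarith]
    _ ≤ |(k2:ℝ)| + |((k1:ℝ)+k2)+((k2:ℝ)+k3)| := abs_sub _ _
    _ ≤ |(k2:ℝ)| + (|(k1:ℝ)+k2| + |(k2:ℝ)+k3|) := by gcongr; exact abs_add_le _ _
    _ = |(k2:ℝ)| + |(k1:ℝ)+k2| + |(k2:ℝ)+k3| := by ring
  have t4qr : |(k4:ℝ)| ≤ |(k3:ℝ)| + |(k1:ℝ)+k3| + |(k2:ℝ)+k3| := by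
    calc |(k4:ℝ)| = |(k3:ℝ) - (((k1:ℝ)+k3) + ((k2:ℝ)+k3))| := by
          rw [show (k3:ℝ) - (((k1:ℝ)+k3)+((k2:ℝ)+k3)) = (k4:ℝ) by linarith]
    _ ≤ |(k3:ℝ)| + |((k1:ℝ)+k3)+((k2:ℝ)+k3)| := abs_sub _ _
    _ ≤ |(k3:ℝ)| + (|(k1:ℝ)+k3| + |(k2:ℝ)+k3|) := by gcongr; exact abs_add_le _ _
    _ = |(k3:ℝ)| + |(k1:ℝ)+k3| + |(k2:ℝ)+k3| := by ring
  have hP4 : |(k4:ℝ)| ≤ 3 / 2 * (|(k1:ℝ)+k2| * (|(k1:ℝ)+k3| * |(k2:ℝ)+k3|)) := by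
    apply helper_P4 _ _ _ _ hp1 hq1 hr1
    calc 2 * |(k4:ℝ)| = |(((k1:ℝ)+k2) + ((k1:ℝ)+k3)) + ((k2:ℝ)+k3)| := by
          rw [show (((k1:ℝ)+k2) + ((k1:ℝ)+k3)) + ((k2:ℝ)+k3) = -(2*(k4:ℝ)) by linarith,
            abs_neg, abs_mul, abs_of_nonneg (by norm_num : (0:ℝ) ≤ 2)]
    _ ≤ |((k1:ℝ)+k2) + ((k1:ℝ)+k3)| + |(k2:ℝ)+k3| := abs_add_le _ _
    _ ≤ |(k1:ℝ)+k2| + |(k1:ℝ)+k3| + |(k2:ℝ)+k3| := by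
          have := abs_add_le ((k1:ℝ)+k2) ((k1:ℝ)+k3); linarith
  have h34 : |(k4:ℝ)| ≤ 3 * (|(k1:ℝ)| * |(k2:ℝ)| * |(k3:ℝ)|) := by
    apply helper_h34 _ _ _ _ h1 h2 h3
    calc |(k4:ℝ)| = |(k1:ℝ) + k2 + k3| := by
          rw [show (k1:ℝ) + k2 + k3 = -(k4:ℝ) by linarith, abs_neg]
    _ ≤ |(k1:ℝ) + k2| + |(k3:ℝ)| := abs_add_le _ _
    _ ≤ |(k1:ℝ)| + |(k2:ℝ)| + |(k3:ℝ)| := by have := abs_add_le (k1:ℝ) (k2:ℝ); linarith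
  have hd : |(k2:ℝ)| * |(k3:ℝ)| ≤ 2 * (|(k1:ℝ)| * |(k4:ℝ)|) ∨
      |(k2:ℝ)| * |(k3:ℝ)| ≤ 2 * (|(k1:ℝ)+k2| * (|(k1:ℝ)+k3| * |(k2:ℝ)+k3|)) := by
    apply helper_hd _ _ _ _ _ _ _ hp1 hq1 hr1 (abs_nonneg _) (abs_nonneg _)
    calc |(k2:ℝ)| * |(k3:ℝ)| - |(k1:ℝ)| * |(k4:ℝ)|
        = |(k2:ℝ) * k3| - |(k1:ℝ) * k4| := by rw [abs_mul, abs_mul]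
    _ ≤ |(k2:ℝ) * k3 - (k1:ℝ) * k4| := abs_sub_abs_le_abs_sub _ _
    _ = |((k1:ℝ)+k2) * ((k1:ℝ)+k3)| := by
          rw [show (k2:ℝ)*k3 - (k1:ℝ)*k4 = ((k1:ℝ)+k2)*((k1:ℝ)+k3) by linear_combination (-(k1:ℝ)) * hsR]
    _ = |(k1:ℝ)+k2| * |(k1:ℝ)+k3| := abs_mul _ _
  obtain ⟨m, hm1, hm2, hb2, hb3, hb4⟩ :=
    mk_m (|(k1:ℝ)|) (|(k2:ℝ)|) (|(k3:ℝ)|) (|(k4:ℝ)|)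
      (|(k1:ℝ)+k2|) (|(k1:ℝ)+k3|) (|(k2:ℝ)+k3|)
      h1 h2 h3 h4 hp1 hq1 hr1 t2 t3 t32 t23 t4pq t4pr t4qr
  have key := hcore (|(k1:ℝ)|) (|(k2:ℝ)|) (|(k3:ℝ)|) (|(k4:ℝ)|) m _
    h1 h2 h3 h4 hm1 hP1 hm2 hb2 hb3 hb4 hP4 h34 hd
  rw [hXcast, hPp, hPq, hPr, mul_assoc (|(k1:ℝ)+k2|)]
  exact key

private lemma helper_PK (A1 A2 A3 A4 u v w : ℝ)
    (h1 : 1 ≤ A1) (h2 : 1 ≤ A2) (h3 : 1 ≤ A3) (h4 : 1 ≤ A4)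
    (hu0 : 0 ≤ u) (hv0 : 0 ≤ v) (hw0 : 0 ≤ w)
    (hu : u ≤ A1 + A2) (hv : v ≤ A1 + A3) (hw : w ≤ A2 + A3) :
    u * v * w ≤ 8 * ((A1 * A2 * A3) * A4) ^ 2 := by
  have b1 : u ≤ 2 * (A1 * A2) := by nlinarith
  have b2 : v ≤ 2 * (A1 * A3) := by nlinarith
  have b3 : w ≤ 2 * (A2 * A3) := by nlinarith
  have step : u * v * w ≤ (2 * (A1 * A2)) * (2 * (A1 * A3)) * (2 * (A2 * A3)) :=
    mul_le_mul (mul_le_mul b1 b2 hv0 (by positivity)) b3 hw0 (by positivity)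
  have e : (2 * (A1 * A2)) * (2 * (A1 * A3)) * (2 * (A2 * A3)) = 8 * (A1 * A2 * A3) ^ 2 := by
    ring
  have hle : A1 * A2 * A3 ≤ A1 * A2 * A3 * A4 := le_mul_of_one_le_right (by positivity) h4
  have last : (A1 * A2 * A3) ^ 2 ≤ (A1 * A2 * A3 * A4) ^ 2 :=
    pow_le_pow_left₀ (by positivity) hle 2
  calc u * v * w ≤ 8 * (A1 * A2 * A3) ^ 2 := by linarith
  _ ≤ 8 * ((A1 * A2 * A3) * A4) ^ 2 := by linarith

private lemma main_key (s' s1' C0 : ℝ) (k1 k2 k3 k4 : ℤ)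
    (key : |((k1 * k2 * k3 : ℤ) : ℝ)| ^ (-s') * |(k4 : ℝ)| ^ s1' ≤
      C0 * |(k1 : ℝ)| *
        (|((k1 + k2 : ℤ) : ℝ)| * |((k1 + k3 : ℤ) : ℝ)| * |((k2 + k3 : ℤ) : ℝ)|) ^ ((1:ℝ)/2))
    (hC0 : 0 < C0)
    (s s1 δ ε : ℝ) (hδ0 : 0 < δ) (hε : 0 < ε) (hε15 : 15 * ε ≤ δ) (hε7 : 7 * ε ≤ 1)
    (hs' : s' = s - δ) (hs1' : s1' = s1 + δ)
    (hk1 : k1 ≠ 0) (hk2 : k2 ≠ 0) (hk3 : k3 ≠ 0) (hk4 : k4 ≠ 0)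
    (hp0 : (k1 + k2) ≠ 0) (hq0 : (k1 + k3) ≠ 0) (hr0 : (k2 + k3) ≠ 0) :
    |((k1 * k2 * k3 : ℤ) : ℝ)| ^ (-s) * |(k4 : ℝ)| ^ s1 *
        |((k1 * k2 * k3 * k4 : ℤ) : ℝ)| ^ ε ≤
      8 * C0 * |(k1 : ℝ)| *
        (|((k1 + k2 : ℤ) : ℝ)| * |((k1 + k3 : ℤ) : ℝ)| * |((k2 + k3 : ℤ) : ℝ)|) ^
          (1 / 2 - 7 * ε) := by
  have hone : ∀ k : ℤ, k ≠ 0 → (1:ℝ) ≤ |(k:ℝ)| := by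
    intro k hk
    have : (1:ℤ) ≤ |k| := Int.one_le_abs hk
    calc (1:ℝ) ≤ ((|k| : ℤ) : ℝ) := by exact_mod_cast this
    _ = |(k:ℝ)| := by push_cast; ring
  set X : ℝ := |((k1 * k2 * k3 : ℤ) : ℝ)| with hXdef
  set A4 : ℝ := |(k4 : ℝ)| with hA4def
  set K : ℝ := |((k1 * k2 * k3 * k4 : ℤ) : ℝ)| with hKdef
  set P : ℝ := |((k1 + k2 : ℤ) : ℝ)| * |((k1 + k3 : ℤ) : ℝ)| * |((k2 + k3 : ℤ) : ℝ)| with hPdef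
  have hX1 : 1 ≤ X := hone _ (by simp [mul_ne_zero, hk1, hk2, hk3])
  have hX0 : (0:ℝ) < X := lt_of_lt_of_le one_pos hX1
  have hA41 : 1 ≤ A4 := hone _ hk4
  have hA40 : (0:ℝ) < A4 := lt_of_lt_of_le one_pos hA41
  have hK1 : 1 ≤ K := hone _ (by simp [mul_ne_zero, hk1, hk2, hk3, hk4])
  have hK0 : (0:ℝ) < K := lt_of_lt_of_le one_pos hK1
  have hp1 : (1:ℝ) ≤ |((k1 + k2 : ℤ) : ℝ)| := hone _ hp0
  have hq1 : (1:ℝ) ≤ |((k1 + k3 : ℤ) : ℝ)| := hone _ hq0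
  have hr1 : (1:ℝ) ≤ |((k2 + k3 : ℤ) : ℝ)| := hone _ hr0
  have hP1 : 1 ≤ P := by
    rw [hPdef]
    nlinarith [mul_le_mul hp1 hq1 zero_le_one (by linarith : (0:ℝ) ≤ |((k1 + k2 : ℤ) : ℝ)|),
      mul_le_mul (mul_le_mul hp1 hq1 zero_le_one (by linarith : (0:ℝ) ≤ |((k1 + k2 : ℤ) : ℝ)|))
        hr1 zero_le_one (by positivity)]
  have hP0 : (0:ℝ) < P := lt_of_lt_of_le one_pos hP1
  have hKX : K = X * A4 := by
    rw [hKdef, hXdef, hA4def]; push_cast; rw [abs_mul]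
  -- P ≤ 8 K^2
  have hA1 : (1:ℝ) ≤ |(k1:ℝ)| := hone _ hk1
  have hA2 : (1:ℝ) ≤ |(k2:ℝ)| := hone _ hk2
  have hA3 : (1:ℝ) ≤ |(k3:ℝ)| := hone _ hk3
  have hXcast : X = |(k1:ℝ)| * |(k2:ℝ)| * |(k3:ℝ)| := by
    rw [hXdef]; push_cast; rw [abs_mul, abs_mul]
  have hPK : P ≤ 8 * K ^ 2 := by
    have hu : |((k1 + k2 : ℤ) : ℝ)| ≤ |(k1:ℝ)| + |(k2:ℝ)| := by
      rw [show ((k1 + k2 : ℤ) : ℝ) = (k1:ℝ) + (k2:ℝ) by push_cast; ring]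
      exact abs_add_le _ _
    have hv : |((k1 + k3 : ℤ) : ℝ)| ≤ |(k1:ℝ)| + |(k3:ℝ)| := by
      rw [show ((k1 + k3 : ℤ) : ℝ) = (k1:ℝ) + (k3:ℝ) by push_cast; ring]
      exact abs_add_le _ _
    have hw : |((k2 + k3 : ℤ) : ℝ)| ≤ |(k2:ℝ)| + |(k3:ℝ)| := by
      rw [show ((k2 + k3 : ℤ) : ℝ) = (k2:ℝ) + (k3:ℝ) by push_cast; ring]
      exact abs_add_le _ _
    have := helper_PK (|(k1:ℝ)|) (|(k2:ℝ)|) (|(k3:ℝ)|) A4 _ _ _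
      hA1 hA2 hA3 hA41 (abs_nonneg _) (abs_nonneg _) (abs_nonneg _) hu hv hw
    rw [hPdef]
    calc |((k1 + k2 : ℤ) : ℝ)| * |((k1 + k3 : ℤ) : ℝ)| * |((k2 + k3 : ℤ) : ℝ)|
        ≤ 8 * ((|(k1:ℝ)| * |(k2:ℝ)| * |(k3:ℝ)|) * A4) ^ 2 := this
    _ = 8 * K ^ 2 := by rw [hKX, hXcast]
  -- rpow manipulations
  have eq1 : X ^ (-s) = X ^ (-s') * X ^ (-δ) := by
    rw [← Real.rpow_add hX0, hs']; ring_nf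
  have eq2 : A4 ^ s1 = A4 ^ s1' * A4 ^ (-δ) := by
    rw [← Real.rpow_add hA40, hs1']; ring_nf
  have eq3 : X ^ (-δ) * A4 ^ (-δ) = K ^ (-δ) := by
    rw [hKX, Real.mul_rpow hX0.le hA40.le]
  have eq4 : K ^ (-δ) * K ^ ε = K ^ (ε - δ) := by
    rw [← Real.rpow_add hK0]; ring_nf
  have eq5 : P ^ ((1:ℝ)/2) = P ^ (1/2 - 7*ε) * P ^ (7*ε) := by
    rw [← Real.rpow_add hP0]; ring_nf
  have step1 : X ^ (-s) * A4 ^ s1 * K ^ ε = (X ^ (-s') * A4 ^ s1') * K ^ (ε - δ) := by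
    rw [eq1, eq2, ← eq4, ← eq3]; ring
  have hKεδ : (0:ℝ) ≤ K ^ (ε - δ) := (Real.rpow_pos_of_pos hK0 _).le
  have step2 : (X ^ (-s') * A4 ^ s1') * K ^ (ε - δ) ≤
      (C0 * |(k1:ℝ)| * P ^ ((1:ℝ)/2)) * K ^ (ε - δ) := by
    apply mul_le_mul_of_nonneg_right _ hKεδ
    exact key
  have hP7 : P ^ (7*ε) ≤ 8 ^ (7*ε) * K ^ (14*ε) := by
    have h8K : P ^ (7*ε) ≤ (8 * K ^ 2) ^ (7*ε) :=
      Real.rpow_le_rpow hP0.le hPK (by positivity)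
    have e1 : ((8:ℝ) * K ^ 2) ^ (7*ε) = 8 ^ (7*ε) * (K ^ 2 : ℝ) ^ (7*ε) :=
      Real.mul_rpow (by norm_num) (by positivity)
    have e2 : ((K:ℝ) ^ 2) ^ (7*ε) = K ^ (14*ε) := by
      rw [← Real.rpow_natCast K 2, ← Real.rpow_mul hK0.le]
      norm_num
      ring_nf
    rw [e1, e2] at h8K
    exact h8K
  have h8e : (8:ℝ) ^ (7*ε) ≤ 8 := by
    have := Real.rpow_le_rpow_of_exponent_le (x := (8:ℝ)) (by norm_num) hε7
    rwa [Real.rpow_one] at this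
  have hKsmall : K ^ (14*ε) * K ^ (ε - δ) ≤ 1 := by
    rw [← Real.rpow_add hK0]
    exact Real.rpow_le_one_of_one_le_of_nonpos hK1 (by linarith)
  calc X ^ (-s) * A4 ^ s1 * K ^ ε
      = (X ^ (-s') * A4 ^ s1') * K ^ (ε - δ) := step1
  _ ≤ (C0 * |(k1:ℝ)| * P ^ ((1:ℝ)/2)) * K ^ (ε - δ) := step2
  _ = C0 * |(k1:ℝ)| * P ^ (1/2 - 7*ε) * (P ^ (7*ε) * K ^ (ε - δ)) := by
        rw [eq5]; ring
  _ ≤ C0 * |(k1:ℝ)| * P ^ (1/2 - 7*ε) * ((8 ^ (7*ε) * K ^ (14*ε)) * K ^ (ε - δ)) := by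
        have h0 : (0:ℝ) ≤ C0 * |(k1:ℝ)| * P ^ (1/2 - 7*ε) := by positivity
        apply mul_le_mul_of_nonneg_left _ h0
        exact mul_le_mul_of_nonneg_right hP7 hKεδ
  _ = C0 * |(k1:ℝ)| * P ^ (1/2 - 7*ε) * (8 ^ (7*ε) * (K ^ (14*ε) * K ^ (ε - δ))) := by ring
  _ ≤ C0 * |(k1:ℝ)| * P ^ (1/2 - 7*ε) * (8 * 1) := by
        have h0 : (0:ℝ) ≤ C0 * |(k1:ℝ)| * P ^ (1/2 - 7*ε) := by positivity
        apply mul_le_mul_of_nonneg_left _ h0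
        apply mul_le_mul h8e hKsmall (by positivity) (by norm_num)
  _ = 8 * C0 * |(k1:ℝ)| * P ^ (1/2 - 7*ε) := by ring

/-- Inequality (22) of the paper: for `s > -1/2` and `s1 < min(3s+1, s+1)` there exist
`C > 0` and `ε0 > 0` such that for all `ε ∈ (0, ε0]` and all nonzero integers
`k1, k2, k3, k4` with `k1+k2+k3+k4 = 0` and `(k1+k2)(k1+k3)(k2+k3) ≠ 0`,
`|k1 k2 k3|^{-s} |k4|^{s1} |k1 k2 k3 k4|^ε ≤ C |k1| (|k1+k2| |k1+k3| |k2+k3|)^{1/2 - 7ε}`. -/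
theorem stmt_6 (s s1 : ℝ) (hs : -1 / 2 < s) (hs1 : s1 < min (3 * s + 1) (s + 1)) :
    ∃ C > (0 : ℝ), ∃ ε0 > (0 : ℝ), ∀ ε : ℝ, 0 < ε → ε ≤ ε0 →
      ∀ k1 k2 k3 k4 : ℤ, k1 ≠ 0 → k2 ≠ 0 → k3 ≠ 0 → k4 ≠ 0 →
        k1 + k2 + k3 + k4 = 0 → (k1 + k2) * (k1 + k3) * (k2 + k3) ≠ 0 →
        |((k1 * k2 * k3 : ℤ) : ℝ)| ^ (-s) * |(k4 : ℝ)| ^ s1 *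
            |((k1 * k2 * k3 * k4 : ℤ) : ℝ)| ^ ε ≤
          C * |(k1 : ℝ)| *
            (|((k1 + k2 : ℤ) : ℝ)| * |((k1 + k3 : ℤ) : ℝ)| * |((k2 + k3 : ℤ) : ℝ)|) ^
              (1 / 2 - 7 * ε) := by
  have hgap1 : 0 < s + 1/2 := by linarith
  have hgap2 : 0 < min (3 * s + 1) (s + 1) - s1 := sub_pos.mpr hs1
  set δ := min (s + 1/2) (min (3 * s + 1) (s + 1) - s1) / 8 with hδdef
  have hδ0 : 0 < δ := div_pos (lt_min hgap1 hgap2) (by norm_num)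
  have hδle1 : 8 * δ ≤ s + 1/2 := by
    have := min_le_left (s + 1/2) (min (3 * s + 1) (s + 1) - s1)
    rw [hδdef]; linarith
  have hδle2 : 8 * δ ≤ min (3 * s + 1) (s + 1) - s1 := by
    have := min_le_right (s + 1/2) (min (3 * s + 1) (s + 1) - s1)
    rw [hδdef]; linarith
  have hmin1 : min (3 * s + 1) (s + 1) ≤ 3 * s + 1 := min_le_left _ _
  have hmin2 : min (3 * s + 1) (s + 1) ≤ s + 1 := min_le_right _ _
  have hs' : -1 / 2 < s - δ := by linarith
  have hs1' : s1 + δ < min (3 * (s - δ) + 1) ((s - δ) + 1) := by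
    rw [lt_min_iff]; constructor <;> linarith
  have hC0 : (0:ℝ) < 4 * 3 ^ (max (s - δ) 0) := by positivity
  refine ⟨8 * (4 * 3 ^ (max (s - δ) 0)), by positivity, min (δ/15) (1/7),
    lt_min (by positivity) (by norm_num), ?_⟩
  intro ε hε hεle k1 k2 k3 k4 hk1 hk2 hk3 hk4 hsum hprod
  have hε15 : 15 * ε ≤ δ := by
    have := le_trans hεle (min_le_left (δ/15) (1/7))
    linarith
  have hε7 : 7 * ε ≤ 1 := by
    have := le_trans hεle (min_le_right (δ/15) (1/7))
    linarith
  have hp0 : k1 + k2 ≠ 0 := fun h => hprod (by rw [h]; ring)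
  have hq0 : k1 + k3 ≠ 0 := fun h => hprod (by rw [h]; ring)
  have hr0 : k2 + k3 ≠ 0 := fun h => hprod (by rw [h]; ring)
  have key := core_int (s - δ) (s1 + δ)
    (fun a1 a2 a3 a4 m P => abstract_core (s - δ) (s1 + δ) hs' hs1' a1 a2 a3 a4 m P)
    k1 k2 k3 k4 hk1 hk2 hk3 hk4 hsum hprod
  exact main_key (s - δ) (s1 + δ) (4 * 3 ^ (max (s - δ) 0)) k1 k2 k3 k4 key hC0
    s s1 δ ε hδ0 hε hε15 hε7 rfl rfl hk1 hk2 hk3 hk4 hp0 hq0 hr0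
end

section
/- Let s > -1/2 and s1 ≤ s + 1. There is a constant C = C(s, s1) such that for all sequences u, v : ℤ → ℂ with u₀ = v₀ = 0 and ‖u‖_{H^s}, ‖v‖_{H^s} < ∞, the series defining B(u,v)_k := -(1/3) Σ_{k₁+k₂=k, k₁≠0, k₂≠0} u_{k₁} v_{k₂} / (k₁ k₂) converges absolutely for every integer k, and, setting B(u,v)₀ := 0, one has ‖B(u,v)‖_{H^{s1}} ≤ C ‖u‖_{H^s} ‖v‖_{H^s}. -/
open scoped ENNReal
open MeasureTheory

/-- Cauchy–Schwarz for `tsum` in `ℝ≥0∞`. -/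
lemma cs_ennreal (X Y : ℤ → ℝ≥0∞) :
    (∑' k, X k * Y k) ≤ (∑' k, X k ^ 2) ^ (1/2 : ℝ) * (∑' k, Y k ^ 2) ^ (1/2 : ℝ) := by
  have hpq : (2:ℝ).HolderConjugate 2 := by constructor <;> norm_num
  have h := ENNReal.lintegral_mul_le_Lp_mul_Lq (Measure.count : Measure ℤ) hpq
    (f := X) (g := Y) (measurable_of_countable X).aemeasurable (measurable_of_countable Y).aemeasurable
  simp only [Pi.mul_apply, lintegral_count] at h
  have e2 : ∀ x : ℝ≥0∞, x ^ (2:ℝ) = x ^ (2:ℕ) := fun x => by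
    rw [← ENNReal.rpow_natCast]; norm_num
  simp only [e2] at h
  convert h using 3

lemma sq4_ennreal (a b : ℝ≥0∞) : (a + b)^2 ≤ 4 * (a^2 + b^2) := by
  rcases le_total a b with h | h
  · calc (a+b)^2 ≤ (b+b)^2 := by gcongr
      _ = 4 * b^2 := by ring
      _ ≤ 4 * (a^2+b^2) := by gcongr; exact le_add_self
  · calc (a+b)^2 ≤ (a+a)^2 := by gcongr
      _ = 4 * a^2 := by ring
      _ ≤ 4 * (a^2+b^2) := by gcongr; exact le_self_add

lemma aux_weight_le (s s1 : ℝ) (hs : -1/2 < s) (hs1 : s1 ≤ s + 1) {x y kk : ℝ}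
    (hx : 1 ≤ x) (hy : 1 ≤ y) (hxy : x ≤ y) (hk1 : 1 ≤ kk) (hk : kk ≤ x + y) :
    kk ^ s1 * (x ^ (-(s+1)) * y ^ (-(s+1))) ≤ 2 ^ (s+1) * (x ^ (-(s+1)) + y ^ (-(s+1))) := by
  have h1 : kk ^ s1 ≤ kk ^ (s+1) := Real.rpow_le_rpow_of_exponent_le hk1 hs1
  have h2 : kk ^ (s+1) ≤ (2*y) ^ (s+1) :=
    Real.rpow_le_rpow (by linarith) (by linarith) (by linarith)
  have h3 : (2*y) ^ (s+1) = 2 ^ (s+1) * y ^ (s+1) :=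
    Real.mul_rpow (by norm_num) (by linarith)
  have hyy : y ^ (s+1) * y ^ (-(s+1)) = 1 := by
    rw [← Real.rpow_add (by linarith), show s+1+(-(s+1)) = 0 by ring, Real.rpow_zero]
  have hxn : (0:ℝ) ≤ x ^ (-(s+1)) := Real.rpow_nonneg (by linarith) _
  have hyn : (0:ℝ) ≤ y ^ (-(s+1)) := Real.rpow_nonneg (by linarith) _
  calc kk ^ s1 * (x ^ (-(s+1)) * y ^ (-(s+1)))
      ≤ (2 ^ (s+1) * y ^ (s+1)) * (x ^ (-(s+1)) * y ^ (-(s+1))) := by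
        apply mul_le_mul_of_nonneg_right _ (by positivity)
        calc kk ^ s1 ≤ kk ^ (s+1) := h1
          _ ≤ (2*y) ^ (s+1) := h2
          _ = _ := h3
    _ = 2 ^ (s+1) * x ^ (-(s+1)) * (y ^ (s+1) * y ^ (-(s+1))) := by ring
    _ = 2 ^ (s+1) * x ^ (-(s+1)) := by rw [hyy, mul_one]
    _ ≤ 2 ^ (s+1) * (x ^ (-(s+1)) + y ^ (-(s+1))) := by
        apply mul_le_mul_of_nonneg_left _ (by positivity); linarith

lemma aux_weight (s s1 : ℝ) (hs : -1/2 < s) (hs1 : s1 ≤ s + 1) {x y kk : ℝ}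
    (hx : 1 ≤ x) (hy : 1 ≤ y) (hk1 : 1 ≤ kk) (hk : kk ≤ x + y) :
    kk ^ s1 * (x ^ (-(s+1)) * y ^ (-(s+1))) ≤ 2 ^ (s+1) * (x ^ (-(s+1)) + y ^ (-(s+1))) := by
  rcases le_total x y with h | h
  · exact aux_weight_le s s1 hs hs1 hx hy h hk1 hk
  · have := aux_weight_le s s1 hs hs1 hy hx h hk1 (by linarith)
    calc kk ^ s1 * (x ^ (-(s+1)) * y ^ (-(s+1)))
        = kk ^ s1 * (y ^ (-(s+1)) * x ^ (-(s+1))) := by ring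
      _ ≤ 2 ^ (s+1) * (y ^ (-(s+1)) + x ^ (-(s+1))) := this
      _ = 2 ^ (s+1) * (x ^ (-(s+1)) + y ^ (-(s+1))) := by ring


/-- The (mean-zero) Sobolev norm `‖u‖_{H^s} = (∑_{k ≠ 0} |k|^{2s} |u_k|²)^{1/2}`,
valued in `ℝ≥0∞` (possibly infinite). -/
noncomputable def hsNorm (s : ℝ) (u : ℤ → ℂ) : ℝ≥0∞ :=
  (∑' k : {k : ℤ // k ≠ 0},
      ENNReal.ofReal (|((k : ℤ) : ℝ)| ^ (2 * s) * ‖u (k : ℤ)‖ ^ 2)) ^ (1 / 2 : ℝ)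

/-- The bilinear normal-form operator
`B(u,v)_k = -(1/3) ∑_{k₁+k₂=k, k₁≠0, k₂≠0} u_{k₁} v_{k₂} / (k₁ k₂)`, with `B(u,v)₀ = 0`.
(The terms with `k₁ = 0` or `k₂ = 0` vanish since `u₀ = v₀ = 0`.) -/
noncomputable def Bop (u v : ℤ → ℂ) : ℤ → ℂ := fun k =>
  if k = 0 then 0
  else -(1 / 3) * ∑' k1 : ℤ, u k1 * v (k - k1) / ((k1 * (k - k1) : ℤ) : ℂ)


lemma half_sq (x : ℝ≥0∞) : (x ^ (1/2 : ℝ))^2 = x := by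
  rw [← ENNReal.rpow_natCast (x ^ (1/2:ℝ)) 2, ← ENNReal.rpow_mul]; norm_num

lemma hsq (t x : ℝ) (hx : 0 ≤ x) : x ^ (2*t) = (x ^ t)^2 := by
  rw [mul_comm, Real.rpow_mul hx, ← Real.rpow_natCast (x ^ t) 2]; norm_num

lemma habs {n : ℤ} (hn : n ≠ 0) : (1:ℝ) ≤ |(n:ℝ)| := by
  have := Int.one_le_abs hn
  calc (1:ℝ) = ((1:ℤ):ℝ) := by norm_num
    _ ≤ ((|n|:ℤ):ℝ) := by exact_mod_cast this
    _ = |(n:ℝ)| := by push_cast; ring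

/-- For `s > -1/2` and `s1 ≤ s + 1` there is `C = C(s, s1)` such that for all sequences
`u, v : ℤ → ℂ` with `u₀ = v₀ = 0` and finite `H^s` norms, the series defining `B(u,v)_k`
converges absolutely for every `k`, and `‖B(u,v)‖_{H^{s1}} ≤ C ‖u‖_{H^s} ‖v‖_{H^s}`. -/
theorem stmt_7 (s s1 : ℝ) (hs : -1 / 2 < s) (hs1 : s1 ≤ s + 1) :
    ∃ C > (0 : ℝ), ∀ u v : ℤ → ℂ, u 0 = 0 → v 0 = 0 →
      hsNorm s u < ⊤ → hsNorm s v < ⊤ →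
      (∀ k : ℤ, Summable fun k1 : ℤ => ‖u k1 * v (k - k1) / ((k1 * (k - k1) : ℤ) : ℂ)‖) ∧
      hsNorm s1 (Bop u v) ≤ ENNReal.ofReal C * hsNorm s u * hsNorm s v := by
  have hsp : (0:ℝ) < s + 1 := by linarith
  set d : ℤ → ℝ := fun n => |(n:ℝ)| ^ (-(s+1)) with hd_def
  have hd0 : ∀ n, 0 ≤ d n := fun n => Real.rpow_nonneg (abs_nonneg _) _
  have hd_zero : d 0 = 0 := by
    simp only [hd_def, Int.cast_zero, abs_zero]
    exact Real.zero_rpow (by linarith)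
  have hd_one : ∀ n, d n ≤ 1 := by
    intro n
    rcases eq_or_ne n 0 with rfl | hn
    · rw [hd_zero]; norm_num
    · exact Real.rpow_le_one_of_one_le_of_nonpos (habs hn) (by linarith)
  have hZsum : Summable (fun n : ℤ => d n ^ 2) := by
    refine (Real.summable_abs_int_rpow (b := 2*(s+1)) (by linarith)).congr fun n => ?_
    show |(n:ℝ)| ^ (-(2*(s+1))) = d n ^ 2
    simp only [hd_def]
    rw [show -(2*(s+1)) = -(s+1) * ((2:ℕ):ℝ) by push_cast; ring,
      Real.rpow_mul (abs_nonneg _), Real.rpow_natCast]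
  set ZR : ℝ := ∑' n : ℤ, d n ^ 2 with hZR_def
  have hZR0 : 0 ≤ ZR := tsum_nonneg fun n => sq_nonneg _
  set c₀ : ℝ := (2:ℝ) ^ (s+1) with hc0_def
  have hc₀ : 0 < c₀ := Real.rpow_pos_of_pos two_pos _
  refine ⟨Real.sqrt (c₀^2 * (8 * ZR)) + 1, by positivity, ?_⟩
  set C : ℝ := Real.sqrt (c₀^2 * (8 * ZR)) + 1 with hC_def
  intro u v hu0 hv0 hu hv
  set f : ℤ → ℝ := fun k => |(k:ℝ)| ^ s * ‖u k‖ with hf_def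
  set g : ℤ → ℝ := fun k => |(k:ℝ)| ^ s * ‖v k‖ with hg_def
  have hf0 : ∀ k, 0 ≤ f k := fun k => mul_nonneg (Real.rpow_nonneg (abs_nonneg _) _) (norm_nonneg _)
  have hg0 : ∀ k, 0 ≤ g k := fun k => mul_nonneg (Real.rpow_nonneg (abs_nonneg _) _) (norm_nonneg _)
  have hfz : f 0 = 0 := by simp [hf_def, hu0]
  have hgz : g 0 = 0 := by simp [hg_def, hv0]
  -- key pointwise identity
  have key_eq : ∀ k k1 : ℤ, ‖u k1 * v (k - k1) / ((k1 * (k - k1) : ℤ) : ℂ)‖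
      = f k1 * g (k - k1) * (d k1 * d (k - k1)) := by
    intro k k1
    rcases eq_or_ne k1 0 with rfl | h1
    · simp [hu0, hfz, hd_zero]
    rcases eq_or_ne (k - k1) 0 with h2 | h2
    · rw [h2]
      simp [hv0, hgz, hd_zero, h2]
    · have cast_eq : ((k1 * (k - k1) : ℤ) : ℂ) = ((k1 : ℤ) : ℂ) * ((k - k1 : ℤ) : ℂ) := by
        push_cast; ring
      rw [cast_eq, norm_div, norm_mul, norm_mul, Complex.norm_intCast, Complex.norm_intCast]
      simp only [hf_def, hg_def, hd_def]
      have e1 : |((k1:ℤ):ℝ)| ^ s * |((k1:ℤ):ℝ)| ^ (-(s+1)) = |((k1:ℤ):ℝ)|⁻¹ := by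
        rw [← Real.rpow_add (by rw [abs_pos]; exact_mod_cast h1),
          show s + -(s+1) = -1 by ring, Real.rpow_neg_one]
      have e2 : |((k - k1 : ℤ):ℝ)| ^ s * |((k - k1:ℤ):ℝ)| ^ (-(s+1)) = |((k - k1:ℤ):ℝ)|⁻¹ := by
        rw [← Real.rpow_add (by rw [abs_pos]; exact_mod_cast h2),
          show s + -(s+1) = -1 by ring, Real.rpow_neg_one]
      rw [div_eq_mul_inv, mul_inv]
      calc ‖u k1‖ * ‖v (k - k1)‖ * (|((k1:ℤ):ℝ)|⁻¹ * |((k - k1:ℤ):ℝ)|⁻¹)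
          = ‖u k1‖ * ‖v (k - k1)‖ *
            ((|((k1:ℤ):ℝ)| ^ s * |((k1:ℤ):ℝ)| ^ (-(s+1))) *
             (|((k - k1:ℤ):ℝ)| ^ s * |((k - k1:ℤ):ℝ)| ^ (-(s+1)))) := by rw [e1, e2]
        _ = |((k1:ℤ):ℝ)| ^ s * ‖u k1‖ * (|((k - k1:ℤ):ℝ)| ^ s * ‖v (k - k1)‖) *
            (|((k1:ℤ):ℝ)| ^ (-(s+1)) * |((k - k1:ℤ):ℝ)| ^ (-(s+1))) := by ring
  -- summability of f^2 from finiteness of hsNorm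
  have sq_from_hs : ∀ (w : ℤ → ℂ), w 0 = 0 → hsNorm s w < ⊤ →
      Summable (fun k : ℤ => (|(k:ℝ)| ^ s * ‖w k‖) ^ 2) := by
    intro w hw0 hw
    have hne : (∑' k : {k : ℤ // k ≠ 0},
        ENNReal.ofReal (|((k:ℤ):ℝ)| ^ (2*s) * ‖w (k:ℤ)‖^2)) ≠ ⊤ := by
      rw [hsNorm] at hw
      exact ((ENNReal.rpow_lt_top_iff_of_pos (by norm_num)).mp hw).ne
    have h2 := ENNReal.summable_toReal hne
    have h3 : Summable (fun k : {k : ℤ // k ≠ 0} => (|((k:ℤ):ℝ)| ^ s * ‖w (k:ℤ)‖) ^ 2) := by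
      refine h2.congr fun k => ?_
      rw [ENNReal.toReal_ofReal (by positivity), hsq s _ (abs_nonneg _)]
      ring
    refine (summable_subtype_and_compl (s := {k : ℤ | k ≠ 0})).mp ⟨h3, ?_⟩
    refine summable_zero.congr fun k => ?_
    have hk : (k : ℤ) = 0 := by simpa using k.2
    rw [hk]
    simp [hw0]
  have hf2 : Summable fun k : ℤ => f k ^ 2 := sq_from_hs u hu0 hu
  have hg2 : Summable fun k : ℤ => g k ^ 2 := sq_from_hs v hv0 hv
  -- shifted summability
  have shift_sum : ∀ (h : ℤ → ℝ), Summable h → ∀ k : ℤ, Summable fun k1 => h (k - k1) := by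
    intro h hh k
    exact ((Equiv.subLeft k).summable_iff (f := h)).mpr hh
  have hfg : ∀ k : ℤ, Summable fun k1 => f k1 * g (k - k1) := by
    intro k
    refine Summable.of_nonneg_of_le (fun k1 => mul_nonneg (hf0 _) (hg0 _)) (fun k1 => ?_)
      ((hf2.add (shift_sum _ hg2 k)).mul_left (1/2 : ℝ))
    nlinarith [sq_nonneg (f k1 - g (k - k1))]
  have hT0 : ∀ k : ℤ, Summable fun k1 => f k1 * g (k - k1) * (d k1 * d (k - k1)) := by
    intro k
    refine Summable.of_nonneg_of_le
      (fun k1 => mul_nonneg (mul_nonneg (hf0 _) (hg0 _)) (mul_nonneg (hd0 _) (hd0 _)))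
      (fun k1 => ?_) (hfg k)
    calc f k1 * g (k - k1) * (d k1 * d (k - k1))
        ≤ f k1 * g (k - k1) * 1 := by
          apply mul_le_mul_of_nonneg_left _ (mul_nonneg (hf0 _) (hg0 _))
          exact mul_le_one₀ (hd_one _) (hd0 _) (hd_one _)
      _ = f k1 * g (k - k1) := mul_one _
  have hsum_norm : ∀ k : ℤ, Summable fun k1 : ℤ => ‖u k1 * v (k - k1) / ((k1 * (k - k1) : ℤ) : ℂ)‖ :=
    fun k => (hT0 k).congr fun k1 => (key_eq k k1).symm
  refine ⟨hsum_norm, ?_⟩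
  have hT : ∀ k : ℤ, Summable fun k1 => f k1 * g (k - k1) * (d k1 + d (k - k1)) := by
    intro k
    refine Summable.of_nonneg_of_le
      (fun k1 => mul_nonneg (mul_nonneg (hf0 _) (hg0 _)) (by positivity))
      (fun k1 => ?_) ((hfg k).mul_left 2)
    calc f k1 * g (k - k1) * (d k1 + d (k - k1))
        ≤ f k1 * g (k - k1) * 2 := by
          apply mul_le_mul_of_nonneg_left _ (mul_nonneg (hf0 _) (hg0 _))
          linarith [hd_one k1, hd_one (k - k1)]
      _ = 2 * (f k1 * g (k - k1)) := by ring
  -- the real pointwise weighted bound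
  have R1 : ∀ k : ℤ, k ≠ 0 → |(k:ℝ)| ^ s1 * ‖Bop u v k‖
      ≤ c₀ * ∑' k1 : ℤ, f k1 * g (k - k1) * (d k1 + d (k - k1)) := by
    intro k hk
    have hB : ‖Bop u v k‖ ≤ ∑' k1 : ℤ, f k1 * g (k - k1) * (d k1 * d (k - k1)) := by
      have hBo : Bop u v k
          = -(1/3 : ℂ) * ∑' k1 : ℤ, u k1 * v (k - k1) / ((k1 * (k - k1) : ℤ) : ℂ) := by
        rw [Bop, if_neg hk]
      rw [hBo, norm_mul]
      have h13 : ‖(-(1/3) : ℂ)‖ ≤ 1 := by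
        rw [norm_neg, show ((1:ℂ)/3) = ((1/3 : ℝ) : ℂ) by norm_num, Complex.norm_real]
        norm_num
      calc ‖(-(1/3):ℂ)‖ * ‖∑' k1 : ℤ, u k1 * v (k - k1) / ((k1 * (k - k1) : ℤ) : ℂ)‖
          ≤ 1 * ‖∑' k1 : ℤ, u k1 * v (k - k1) / ((k1 * (k - k1) : ℤ) : ℂ)‖ :=
            mul_le_mul_of_nonneg_right h13 (norm_nonneg _)
        _ = ‖∑' k1 : ℤ, u k1 * v (k - k1) / ((k1 * (k - k1) : ℤ) : ℂ)‖ := one_mul _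
        _ ≤ ∑' k1 : ℤ, ‖u k1 * v (k - k1) / ((k1 * (k - k1) : ℤ) : ℂ)‖ :=
            norm_tsum_le_tsum_norm (hsum_norm k)
        _ = _ := tsum_congr (key_eq k)
    have W : ∀ k1 : ℤ, |(k:ℝ)| ^ s1 * (f k1 * g (k - k1) * (d k1 * d (k - k1)))
        ≤ c₀ * (f k1 * g (k - k1) * (d k1 + d (k - k1))) := by
      intro k1
      have core : |(k:ℝ)| ^ s1 * (d k1 * d (k - k1)) ≤ c₀ * (d k1 + d (k - k1)) := by
        rcases eq_or_ne k1 0 with rfl | h1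
        · rw [hd_zero, zero_mul, mul_zero]
          exact mul_nonneg hc₀.le (add_nonneg le_rfl (hd0 _))
        · rcases eq_or_ne (k - k1) 0 with h2 | h2
          · rw [h2, hd_zero, mul_zero, mul_zero]
            exact mul_nonneg hc₀.le (add_nonneg (hd0 _) le_rfl)
          · have hkk : |(k:ℝ)| ≤ |((k1:ℤ):ℝ)| + |((k - k1 : ℤ):ℝ)| := by
              have hc : (k:ℝ) = ((k1:ℤ):ℝ) + ((k - k1 : ℤ):ℝ) := by push_cast; ring
              rw [hc]; exact abs_add_le _ _
            simpa only [hd_def, hc0_def] using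
              aux_weight s s1 hs hs1 (habs h1) (habs h2) (habs hk) hkk
      calc |(k:ℝ)| ^ s1 * (f k1 * g (k - k1) * (d k1 * d (k - k1)))
          = (f k1 * g (k - k1)) * (|(k:ℝ)| ^ s1 * (d k1 * d (k - k1))) := by ring
        _ ≤ (f k1 * g (k - k1)) * (c₀ * (d k1 + d (k - k1))) :=
            mul_le_mul_of_nonneg_left core (mul_nonneg (hf0 _) (hg0 _))
        _ = c₀ * (f k1 * g (k - k1) * (d k1 + d (k - k1))) := by ring
    calc |(k:ℝ)| ^ s1 * ‖Bop u v k‖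
        ≤ |(k:ℝ)| ^ s1 * ∑' k1 : ℤ, f k1 * g (k - k1) * (d k1 * d (k - k1)) :=
          mul_le_mul_of_nonneg_left hB (Real.rpow_nonneg (abs_nonneg _) _)
      _ = ∑' k1 : ℤ, |(k:ℝ)| ^ s1 * (f k1 * g (k - k1) * (d k1 * d (k - k1))) := tsum_mul_left.symm
      _ ≤ ∑' k1 : ℤ, c₀ * (f k1 * g (k - k1) * (d k1 + d (k - k1))) :=
          Summable.tsum_le_tsum W ((hT0 k).mul_left _) ((hT k).mul_left _)
      _ = c₀ * ∑' k1 : ℤ, f k1 * g (k - k1) * (d k1 + d (k - k1)) := tsum_mul_left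
  -- ENNReal setup
  set F : ℤ → ℝ≥0∞ := fun k => ENNReal.ofReal (f k) with hF_def
  set G : ℤ → ℝ≥0∞ := fun k => ENNReal.ofReal (g k) with hG_def
  set D : ℤ → ℝ≥0∞ := fun k => ENNReal.ofReal (d k) with hD_def
  have hZE : (∑' n : ℤ, D n ^ 2) = ENNReal.ofReal ZR := by
    rw [hZR_def, ENNReal.ofReal_tsum_of_nonneg (fun n => sq_nonneg _) hZsum]
    refine tsum_congr fun n => ?_
    simp only [hD_def]
    exact (ENNReal.ofReal_pow (hd0 n) 2).symm
  have norm_u_eq : hsNorm s u = (∑' k : ℤ, F k ^ 2) ^ (1/2 : ℝ) := by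
    have hsub : (∑' k : {k : ℤ // k ≠ 0},
          ENNReal.ofReal (|((k:ℤ):ℝ)| ^ (2*s) * ‖u (k:ℤ)‖^2))
        = ∑' k : ℤ, Set.indicator {k : ℤ | k ≠ 0}
            (fun k => ENNReal.ofReal (|(k:ℝ)| ^ (2*s) * ‖u k‖^2)) k :=
      tsum_subtype {k : ℤ | k ≠ 0} (fun k => ENNReal.ofReal (|(k:ℝ)| ^ (2*s) * ‖u k‖^2))
    rw [hsNorm, hsub]
    congr 1
    refine tsum_congr fun k => ?_
    rcases eq_or_ne k 0 with rfl | hk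
    · rw [Set.indicator_of_notMem (show (0:ℤ) ∉ {k : ℤ | k ≠ 0} by simp)]
      simp [hF_def, hfz]
    · rw [Set.indicator_of_mem (show k ∈ {k : ℤ | k ≠ 0} from hk)]
      simp only [hF_def]
      rw [← ENNReal.ofReal_pow (hf0 k)]
      congr 1
      rw [hsq s _ (abs_nonneg _)]
      simp only [hf_def]
      ring
  have norm_v_eq : hsNorm s v = (∑' k : ℤ, G k ^ 2) ^ (1/2 : ℝ) := by
    have hsub : (∑' k : {k : ℤ // k ≠ 0},
          ENNReal.ofReal (|((k:ℤ):ℝ)| ^ (2*s) * ‖v (k:ℤ)‖^2))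
        = ∑' k : ℤ, Set.indicator {k : ℤ | k ≠ 0}
            (fun k => ENNReal.ofReal (|(k:ℝ)| ^ (2*s) * ‖v k‖^2)) k :=
      tsum_subtype {k : ℤ | k ≠ 0} (fun k => ENNReal.ofReal (|(k:ℝ)| ^ (2*s) * ‖v k‖^2))
    rw [hsNorm, hsub]
    congr 1
    refine tsum_congr fun k => ?_
    rcases eq_or_ne k 0 with rfl | hk
    · rw [Set.indicator_of_notMem (show (0:ℤ) ∉ {k : ℤ | k ≠ 0} by simp)]
      simp [hG_def, hgz]
    · rw [Set.indicator_of_mem (show k ∈ {k : ℤ | k ≠ 0} from hk)]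
      simp only [hG_def]
      rw [← ENNReal.ofReal_pow (hg0 k)]
      congr 1
      rw [hsq s _ (abs_nonneg _)]
      simp only [hg_def]
      ring
  have norm_B_eq : hsNorm s1 (Bop u v)
      = (∑' k : ℤ, Set.indicator {k : ℤ | k ≠ 0}
          (fun k => ENNReal.ofReal (|(k:ℝ)| ^ (2*s1) * ‖Bop u v k‖^2)) k) ^ (1/2 : ℝ) := by
    have hsub : (∑' k : {k : ℤ // k ≠ 0},
          ENNReal.ofReal (|((k:ℤ):ℝ)| ^ (2*s1) * ‖Bop u v (k:ℤ)‖^2))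
        = ∑' k : ℤ, Set.indicator {k : ℤ | k ≠ 0}
            (fun k => ENNReal.ofReal (|(k:ℝ)| ^ (2*s1) * ‖Bop u v k‖^2)) k :=
      tsum_subtype {k : ℤ | k ≠ 0} (fun k => ENNReal.ofReal (|(k:ℝ)| ^ (2*s1) * ‖Bop u v k‖^2))
    rw [hsNorm, hsub]
  -- per-k ENNReal estimate
  have E1 : ∀ k : ℤ, Set.indicator {k : ℤ | k ≠ 0}
        (fun k => ENNReal.ofReal (|(k:ℝ)| ^ (2*s1) * ‖Bop u v k‖^2)) k
      ≤ ENNReal.ofReal c₀ ^ 2 * (8 * ENNReal.ofReal ZR) * ∑' k1 : ℤ, (F k1 * G (k - k1))^2 := by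
    intro k
    rcases eq_or_ne k 0 with rfl | hk
    · rw [Set.indicator_of_notMem (show (0:ℤ) ∉ {k : ℤ | k ≠ 0} by simp)]
      exact zero_le
    rw [Set.indicator_of_mem (show k ∈ {k : ℤ | k ≠ 0} from hk)]
    have hrw : |(k:ℝ)| ^ (2*s1) * ‖Bop u v k‖^2 = (|(k:ℝ)| ^ s1 * ‖Bop u v k‖)^2 := by
      rw [hsq s1 _ (abs_nonneg _)]; ring
    rw [hrw]
    have step1 : ENNReal.ofReal ((|(k:ℝ)| ^ s1 * ‖Bop u v k‖)^2)
        ≤ ENNReal.ofReal ((c₀ * ∑' k1 : ℤ, f k1 * g (k - k1) * (d k1 + d (k - k1)))^2) :=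
      ENNReal.ofReal_le_ofReal (pow_le_pow_left₀
        (mul_nonneg (Real.rpow_nonneg (abs_nonneg _) _) (norm_nonneg _)) (R1 k hk) 2)
    refine step1.trans ?_
    have hTnn : (0:ℝ) ≤ ∑' k1 : ℤ, f k1 * g (k - k1) * (d k1 + d (k - k1)) :=
      tsum_nonneg fun k1 => mul_nonneg (mul_nonneg (hf0 _) (hg0 _)) (add_nonneg (hd0 _) (hd0 _))
    rw [ENNReal.ofReal_pow (mul_nonneg hc₀.le hTnn), ENNReal.ofReal_mul hc₀.le]
    have hofT : ENNReal.ofReal (∑' k1 : ℤ, f k1 * g (k - k1) * (d k1 + d (k - k1)))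
        = ∑' k1 : ℤ, (F k1 * G (k - k1)) * (D k1 + D (k - k1)) := by
      rw [ENNReal.ofReal_tsum_of_nonneg
        (fun k1 => mul_nonneg (mul_nonneg (hf0 _) (hg0 _)) (add_nonneg (hd0 _) (hd0 _))) (hT k)]
      refine tsum_congr fun k1 => ?_
      simp only [hF_def, hG_def, hD_def]
      rw [ENNReal.ofReal_mul (mul_nonneg (hf0 _) (hg0 _)), ENNReal.ofReal_mul (hf0 _),
        ENNReal.ofReal_add (hd0 _) (hd0 _)]
    rw [hofT]
    have cs := cs_ennreal (fun k1 => F k1 * G (k - k1)) (fun k1 => D k1 + D (k - k1))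
    have hshift : (∑' k1 : ℤ, D (k - k1) ^ 2) = ∑' n : ℤ, D n ^ 2 := by
      have h := (Equiv.subLeft k).tsum_eq (fun n : ℤ => D n ^ 2)
      simpa only [Equiv.subLeft_apply] using h
    have hD8 : (∑' k1 : ℤ, (D k1 + D (k - k1))^2) ≤ 8 * ENNReal.ofReal ZR := by
      calc (∑' k1 : ℤ, (D k1 + D (k - k1))^2)
          ≤ ∑' k1 : ℤ, 4 * (D k1^2 + D (k - k1)^2) :=
            ENNReal.tsum_le_tsum fun k1 => sq4_ennreal _ _
        _ = 4 * ((∑' k1 : ℤ, D k1^2) + ∑' k1 : ℤ, D (k - k1)^2) := by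
            rw [ENNReal.tsum_mul_left, ENNReal.tsum_add]
        _ = 8 * ENNReal.ofReal ZR := by rw [hshift, hZE]; ring
    have hsq2 : (∑' k1 : ℤ, (F k1 * G (k - k1)) * (D k1 + D (k - k1)))^2
        ≤ (∑' k1 : ℤ, (F k1 * G (k - k1))^2) * (8 * ENNReal.ofReal ZR) := by
      calc (∑' k1 : ℤ, (F k1 * G (k - k1)) * (D k1 + D (k - k1)))^2
          ≤ ((∑' k1 : ℤ, (F k1 * G (k - k1))^2) ^ (1/2:ℝ)
              * (∑' k1 : ℤ, (D k1 + D (k - k1))^2) ^ (1/2:ℝ))^2 := pow_le_pow_left' cs 2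
        _ = (∑' k1 : ℤ, (F k1 * G (k - k1))^2) * (∑' k1 : ℤ, (D k1 + D (k - k1))^2) := by
            rw [mul_pow, half_sq, half_sq]
        _ ≤ _ := mul_le_mul_right hD8 _
    calc (ENNReal.ofReal c₀ * ∑' k1 : ℤ, (F k1 * G (k - k1)) * (D k1 + D (k - k1)))^2
        = ENNReal.ofReal c₀ ^ 2 * (∑' k1 : ℤ, (F k1 * G (k - k1)) * (D k1 + D (k - k1)))^2 := by
          rw [mul_pow]
      _ ≤ ENNReal.ofReal c₀ ^ 2 * ((∑' k1 : ℤ, (F k1 * G (k - k1))^2) * (8 * ENNReal.ofReal ZR)) :=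
          mul_le_mul_right hsq2 _
      _ = ENNReal.ofReal c₀ ^ 2 * (8 * ENNReal.ofReal ZR) * ∑' k1 : ℤ, (F k1 * G (k - k1))^2 := by
          ring
  -- sum over k and Fubini
  have main : (∑' k : ℤ, Set.indicator {k : ℤ | k ≠ 0}
        (fun k => ENNReal.ofReal (|(k:ℝ)| ^ (2*s1) * ‖Bop u v k‖^2)) k)
      ≤ ENNReal.ofReal c₀ ^ 2 * (8 * ENNReal.ofReal ZR)
        * ((∑' k : ℤ, F k ^ 2) * (∑' k : ℤ, G k ^ 2)) := by
    calc _ ≤ ∑' k : ℤ, ENNReal.ofReal c₀ ^ 2 * (8 * ENNReal.ofReal ZR)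
            * ∑' k1 : ℤ, (F k1 * G (k - k1))^2 := ENNReal.tsum_le_tsum E1
      _ = ENNReal.ofReal c₀ ^ 2 * (8 * ENNReal.ofReal ZR)
            * ∑' k : ℤ, ∑' k1 : ℤ, (F k1 * G (k - k1))^2 := ENNReal.tsum_mul_left
      _ = ENNReal.ofReal c₀ ^ 2 * (8 * ENNReal.ofReal ZR)
            * ((∑' k : ℤ, F k ^ 2) * (∑' k : ℤ, G k ^ 2)) := by
          congr 1
          rw [ENNReal.tsum_comm, ← ENNReal.tsum_mul_right]
          refine tsum_congr fun k1 => ?_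
          have hinner : (∑' k : ℤ, (F k1 * G (k - k1))^2)
              = F k1 ^ 2 * ∑' k : ℤ, G (k - k1)^2 := by
            rw [← ENNReal.tsum_mul_left]
            exact tsum_congr fun k => by rw [mul_pow]
          have hsh : (∑' k : ℤ, G (k - k1)^2) = ∑' n : ℤ, G n ^ 2 := by
            have h := (Equiv.subRight k1).tsum_eq (fun n : ℤ => G n ^ 2)
            simpa only [Equiv.subRight_apply] using h
          rw [hinner, hsh]
  rw [norm_B_eq, norm_u_eq, norm_v_eq]
  refine (ENNReal.rpow_le_rpow main (by norm_num : (0:ℝ) ≤ 1/2)).trans ?_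
  have hCsq : ENNReal.ofReal c₀ ^ 2 * (8 * ENNReal.ofReal ZR) ≤ ENNReal.ofReal C ^ 2 := by
    rw [← ENNReal.ofReal_pow hc₀.le, ← ENNReal.ofReal_pow (by positivity)]
    calc ENNReal.ofReal (c₀^2) * (8 * ENNReal.ofReal ZR)
        = ENNReal.ofReal (c₀^2) * (ENNReal.ofReal 8 * ENNReal.ofReal ZR) := by
          norm_num
      _ = ENNReal.ofReal (c₀^2 * (8 * ZR)) := by
          rw [← ENNReal.ofReal_mul (by norm_num : (0:ℝ) ≤ 8),
            ← ENNReal.ofReal_mul (sq_nonneg c₀)]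
      _ ≤ ENNReal.ofReal (C^2) := by
          apply ENNReal.ofReal_le_ofReal
          rw [hC_def]
          nlinarith [Real.sq_sqrt (by positivity : (0:ℝ) ≤ c₀^2*(8*ZR)),
            Real.sqrt_nonneg (c₀^2*(8*ZR))]
  calc (ENNReal.ofReal c₀ ^ 2 * (8 * ENNReal.ofReal ZR)
        * ((∑' k : ℤ, F k ^ 2) * (∑' k : ℤ, G k ^ 2))) ^ (1/2:ℝ)
      ≤ (ENNReal.ofReal C ^ 2 * ((∑' k : ℤ, F k ^ 2) * (∑' k : ℤ, G k ^ 2))) ^ (1/2:ℝ) :=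
        ENNReal.rpow_le_rpow (mul_le_mul_left hCsq _) (by norm_num)
    _ = ENNReal.ofReal C * (∑' k : ℤ, F k ^ 2) ^ (1/2:ℝ) * (∑' k : ℤ, G k ^ 2) ^ (1/2:ℝ) := by
        have hCC : ((ENNReal.ofReal C ^ 2 : ℝ≥0∞) ^ (1/2:ℝ)) = ENNReal.ofReal C := by
          rw [← ENNReal.rpow_natCast (ENNReal.ofReal C) 2, ← ENNReal.rpow_mul]; norm_num
        rw [ENNReal.mul_rpow_of_nonneg _ _ (by norm_num : (0:ℝ) ≤ 1/2),
          ENNReal.mul_rpow_of_nonneg _ _ (by norm_num : (0:ℝ) ≤ 1/2), hCC]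
        ring
end

section
/- Let s ∈ ℝ and s1 ≤ 3s + 1. For all sequences u, v, w : ℤ → ℂ with u₀ = v₀ = w₀ = 0, the sequence r defined by r_k := u_k v_k w_k / k for k ≠ 0 and r₀ := 0 satisfies ‖r‖_{H^{s1}} ≤ ‖u‖_{H^s} ‖v‖_{H^s} ‖w‖_{H^s}. -/
open scoped ENNReal

private lemma termwise (s s1 : ℝ) (hs1 : s1 ≤ 3 * s + 1) (a b c : ℂ) (k : ℤ) (hk : k ≠ 0) :
    |(k:ℝ)| ^ (2*s1) * ‖a*b*c/(k:ℂ)‖^2 ≤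
      (|(k:ℝ)| ^ (2*s) * ‖a‖^2) * (|(k:ℝ)| ^ (2*s) * ‖b‖^2) * (|(k:ℝ)| ^ (2*s) * ‖c‖^2) := by
  have h1 : (1:ℝ) ≤ |(k:ℝ)| := by
    rw [← Int.cast_abs]; exact_mod_cast Int.one_le_abs hk
  have h0 : (0:ℝ) < |(k:ℝ)| := lt_of_lt_of_le one_pos h1
  have hnorm : ‖a*b*c/(k:ℂ)‖ = ‖a‖*‖b‖*‖c‖/|(k:ℝ)| := by
    simp [norm_div, norm_mul, Complex.norm_intCast]
  rw [hnorm]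
  rw [div_pow]
  have key : |(k:ℝ)| ^ (2*s1) * ((‖a‖*‖b‖*‖c‖)^2 / |(k:ℝ)|^(2:ℕ))
      = |(k:ℝ)| ^ (2*s1-2) * (‖a‖*‖b‖*‖c‖)^2 := by
    rw [Real.rpow_sub h0]
    have hsq : |(k:ℝ)|^(2:ℕ) = |(k:ℝ)| ^ (2:ℝ) := by
      norm_num [Real.rpow_natCast]
    rw [hsq]; ring
  rw [key]
  have hexp : |(k:ℝ)| ^ (2*s1 - 2) ≤ |(k:ℝ)| ^ (2*s+(2*s+2*s)) := by
    apply Real.rpow_le_rpow_of_exponent_le h1; linarith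
  calc |(k:ℝ)| ^ (2*s1-2) * (‖a‖*‖b‖*‖c‖)^2
      ≤ |(k:ℝ)| ^ (2*s+(2*s+2*s)) * (‖a‖*‖b‖*‖c‖)^2 := by
        apply mul_le_mul_of_nonneg_right hexp (by positivity)
    _ = (|(k:ℝ)| ^ (2*s) * ‖a‖^2) * (|(k:ℝ)| ^ (2*s) * ‖b‖^2) * (|(k:ℝ)| ^ (2*s) * ‖c‖^2) := by
        rw [Real.rpow_add h0, Real.rpow_add h0]; ring

/-- For `s1 ≤ 3s + 1`, the resonant cubic sequence `r_k = u_k v_k w_k / k` (`k ≠ 0`),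
`r₀ = 0`, satisfies `‖r‖_{H^{s1}} ≤ ‖u‖_{H^s} ‖v‖_{H^s} ‖w‖_{H^s}`. -/
theorem stmt_8 (s s1 : ℝ) (hs1 : s1 ≤ 3 * s + 1) (u v w : ℤ → ℂ)
    (hu : u 0 = 0) (hv : v 0 = 0) (hw : w 0 = 0) :
    hsNorm s1 (fun k => if k = 0 then 0 else u k * v k * w k / (k : ℂ)) ≤
      hsNorm s u * hsNorm s v * hsNorm s w := by
  unfold hsNorm
  set F : {k : ℤ // k ≠ 0} → ℝ≥0∞ := fun k =>
    ENNReal.ofReal (|((k : ℤ) : ℝ)| ^ (2 * s) * ‖u (k : ℤ)‖ ^ 2) with hF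
  set G : {k : ℤ // k ≠ 0} → ℝ≥0∞ := fun k =>
    ENNReal.ofReal (|((k : ℤ) : ℝ)| ^ (2 * s) * ‖v (k : ℤ)‖ ^ 2) with hG
  set H : {k : ℤ // k ≠ 0} → ℝ≥0∞ := fun k =>
    ENNReal.ofReal (|((k : ℤ) : ℝ)| ^ (2 * s) * ‖w (k : ℤ)‖ ^ 2) with hH
  set A := ∑' k, F k with hA
  set B := ∑' k, G k with hB
  set C := ∑' k, H k with hC
  have hsum : (∑' k : {k : ℤ // k ≠ 0},
      ENNReal.ofReal (|((k : ℤ) : ℝ)| ^ (2 * s1) *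
        ‖(fun k => if k = 0 then 0 else u k * v k * w k / (k : ℂ)) (k : ℤ)‖ ^ 2))
      ≤ A * B * C := by
    calc (∑' k : {k : ℤ // k ≠ 0},
        ENNReal.ofReal (|((k : ℤ) : ℝ)| ^ (2 * s1) *
          ‖(fun k => if k = 0 then 0 else u k * v k * w k / (k : ℂ)) (k : ℤ)‖ ^ 2))
        ≤ ∑' k : {k : ℤ // k ≠ 0}, F k * (G k * H k) := by
          apply ENNReal.tsum_le_tsum
          intro k
          simp only [k.2, if_false]
          have h1 := termwise s s1 hs1 (u k) (v k) (w k) k k.2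
          calc ENNReal.ofReal (|((k : ℤ) : ℝ)| ^ (2 * s1) * ‖u k * v k * w k / ((k:ℤ) : ℂ)‖ ^ 2)
              ≤ ENNReal.ofReal ((|((k:ℤ):ℝ)| ^ (2*s) * ‖u (k:ℤ)‖^2) *
                  ((|((k:ℤ):ℝ)| ^ (2*s) * ‖v (k:ℤ)‖^2) * (|((k:ℤ):ℝ)| ^ (2*s) * ‖w (k:ℤ)‖^2))) := by
                apply ENNReal.ofReal_le_ofReal
                rw [← mul_assoc]
                exact h1
            _ = F k * (G k * H k) := by
                simp only [hF, hG, hH]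
                rw [← ENNReal.ofReal_mul (by positivity), ← ENNReal.ofReal_mul (by positivity)]
      _ ≤ ∑' k : {k : ℤ // k ≠ 0}, F k * (B * C) := by
          apply ENNReal.tsum_le_tsum
          intro k
          exact mul_le_mul_right (mul_le_mul' (ENNReal.le_tsum k) (ENNReal.le_tsum k)) _
      _ = A * (B * C) := by rw [ENNReal.tsum_mul_right]
      _ = A * B * C := by rw [mul_assoc]
  calc (∑' k : {k : ℤ // k ≠ 0},
      ENNReal.ofReal (|((k : ℤ) : ℝ)| ^ (2 * s1) *
        ‖(fun k => if k = 0 then 0 else u k * v k * w k / (k : ℂ)) (k : ℤ)‖ ^ 2)) ^ (1/2 : ℝ)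
      ≤ (A * B * C) ^ (1/2 : ℝ) := ENNReal.rpow_le_rpow hsum (by norm_num)
    _ = A ^ (1/2:ℝ) * B ^ (1/2:ℝ) * C ^ (1/2:ℝ) := by
        rw [ENNReal.mul_rpow_of_nonneg _ _ (by norm_num),
            ENNReal.mul_rpow_of_nonneg _ _ (by norm_num)]
end

section
/- Let s ≥ -1/2 and s1 ≥ -1 - s. For all sequences λ, u : ℤ → ℂ with λ₀ = u₀ = 0 and ‖λ‖_{H^{s1}}, ‖u‖_{H^s} < ∞, the sequence ρ defined by ρ_k := λ_k · Σ_{j ≠ 0} |λ_j| |u_j| / |j| satisfies ‖ρ‖_{H^{s1}} ≤ ‖λ‖_{H^{s1}}² ‖u‖_{H^s}. -/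
open scoped ENNReal

/-- Cauchy–Schwarz for `ℝ≥0∞`-valued tsums over a countable type. -/
lemma tsum_mul_le_sqrt_mul_sqrt (f g : {k : ℤ // k ≠ 0} → ℝ≥0∞) :
    ∑' k, f k * g k ≤ (∑' k, f k ^ 2) ^ (1 / 2 : ℝ) * (∑' k, g k ^ 2) ^ (1 / 2 : ℝ) := by
  have hpq : (2 : ℝ).HolderConjugate 2 := Real.holderConjugate_iff.mpr ⟨one_lt_two, by norm_num⟩
  have h := ENNReal.lintegral_mul_le_Lp_mul_Lq (MeasureTheory.Measure.count) hpq
    (f := f) (g := g) (measurable_of_countable f).aemeasurable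
    (measurable_of_countable g).aemeasurable
  rw [MeasureTheory.lintegral_count, MeasureTheory.lintegral_count,
    MeasureTheory.lintegral_count] at h
  have h2 : ∀ x : ℝ≥0∞, x ^ (2 : ℝ) = x ^ 2 := fun x => by
    rw [← ENNReal.rpow_natCast]; norm_num
  simp only [Pi.mul_apply, h2] at h
  exact h

/-- For `s ≥ -1/2` and `s1 ≥ -1 - s`, and sequences `lam, u : ℤ → ℂ` vanishing at `0`
with finite norms, the sequence `ρ_k = lam_k ∑_{j ≠ 0} |lam_j| |u_j| / |j|` satisfies
`‖ρ‖_{H^{s1}} ≤ ‖lam‖_{H^{s1}}² ‖u‖_{H^s}`. -/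
theorem stmt_9 (s s1 : ℝ) (hs : -1 / 2 ≤ s) (hs1 : -1 - s ≤ s1)
    (lam u : ℤ → ℂ) (hlam0 : lam 0 = 0) (hu0 : u 0 = 0)
    (hlam : hsNorm s1 lam < ⊤) (hu : hsNorm s u < ⊤) :
    hsNorm s1 (fun k =>
        lam k *
          ((∑' j : {j : ℤ // j ≠ 0}, ‖lam (j : ℤ)‖ * ‖u (j : ℤ)‖ / |((j : ℤ) : ℝ)| : ℝ) : ℂ)) ≤
      hsNorm s1 lam ^ 2 * hsNorm s u := by
  classical
  set I := {k : ℤ // k ≠ 0}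
  -- absolute values of frequencies are ≥ 1
  have hx1 : ∀ k : I, (1 : ℝ) ≤ |((k : ℤ) : ℝ)| := by
    intro k
    have : (1 : ℤ) ≤ |(k : ℤ)| := Int.one_le_abs (by exact_mod_cast k.2)
    calc (1:ℝ) ≤ (|(k : ℤ)| : ℝ) := by exact_mod_cast this
      _ = |((k : ℤ) : ℝ)| := by push_cast; ring
  have hx0 : ∀ k : I, (0 : ℝ) < |((k : ℤ) : ℝ)| := fun k => lt_of_lt_of_le one_pos (hx1 k)
  set f : I → ℝ≥0∞ := fun k => ENNReal.ofReal (|((k : ℤ) : ℝ)| ^ s1 * ‖lam (k : ℤ)‖)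
  set g : I → ℝ≥0∞ := fun k => ENNReal.ofReal (|((k : ℤ) : ℝ)| ^ s * ‖u (k : ℤ)‖)
  -- rewrite the summands of the two norms as squares
  have hf2 : ∀ k : I, ENNReal.ofReal (|((k : ℤ) : ℝ)| ^ (2 * s1) * ‖lam (k : ℤ)‖ ^ 2)
      = f k ^ 2 := by
    intro k
    have hx := (hx0 k).le
    have h1 : |((k : ℤ) : ℝ)| ^ (2 * s1) = (|((k : ℤ) : ℝ)| ^ s1) ^ 2 := by
      rw [mul_comm, Real.rpow_mul hx, Real.rpow_two]
    rw [h1, ← mul_pow, ENNReal.ofReal_pow (by positivity)]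
  have hg2 : ∀ k : I, ENNReal.ofReal (|((k : ℤ) : ℝ)| ^ (2 * s) * ‖u (k : ℤ)‖ ^ 2)
      = g k ^ 2 := by
    intro k
    have hx := (hx0 k).le
    have h1 : |((k : ℤ) : ℝ)| ^ (2 * s) = (|((k : ℤ) : ℝ)| ^ s) ^ 2 := by
      rw [mul_comm, Real.rpow_mul hx, Real.rpow_two]
    rw [h1, ← mul_pow, ENNReal.ofReal_pow (by positivity)]
  set A : ℝ≥0∞ := ∑' k : I, f k ^ 2 with hA
  set B : ℝ≥0∞ := ∑' k : I, g k ^ 2 with hB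
  have hlamA : hsNorm s1 lam = A ^ (1 / 2 : ℝ) := by
    unfold hsNorm; rw [hA]; congr 1; exact tsum_congr hf2
  have huB : hsNorm s u = B ^ (1 / 2 : ℝ) := by
    unfold hsNorm; rw [hB]; congr 1; exact tsum_congr hg2
  set C : ℝ := ∑' j : I, ‖lam (j : ℤ)‖ * ‖u (j : ℤ)‖ / |((j : ℤ) : ℝ)| with hC
  have hCnn : 0 ≤ C := tsum_nonneg (fun j => by positivity)
  -- the LHS equals A^{1/2} * ofReal C
  have hLHS : hsNorm s1 (fun k => lam k * (C : ℂ)) = A ^ (1 / 2 : ℝ) * ENNReal.ofReal C := by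
    unfold hsNorm
    have hterm : ∀ k : I,
        ENNReal.ofReal (|((k : ℤ) : ℝ)| ^ (2 * s1) * ‖lam (k : ℤ) * (C : ℂ)‖ ^ 2)
          = f k ^ 2 * ENNReal.ofReal C ^ 2 := by
      intro k
      have hnc : ‖(C : ℂ)‖ = C := by
        rw [Complex.norm_real, Real.norm_eq_abs, abs_of_nonneg hCnn]
      rw [norm_mul, hnc, mul_pow, ← mul_assoc,
        ENNReal.ofReal_mul (by positivity), hf2 k, ENNReal.ofReal_pow hCnn]
    rw [tsum_congr hterm, ENNReal.tsum_mul_right, ← hA,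
      ENNReal.mul_rpow_of_nonneg _ _ (by norm_num : (0:ℝ) ≤ 1/2)]
    congr 1
    rw [← ENNReal.rpow_natCast (ENNReal.ofReal C) 2, ← ENNReal.rpow_mul]
    norm_num
  -- Cauchy–Schwarz bound on C
  have hCle : ENNReal.ofReal C ≤ A ^ (1 / 2 : ℝ) * B ^ (1 / 2 : ℝ) := by
    have step1 : ENNReal.ofReal C ≤ ∑' j : I, f j * g j := by
      have hterm : ∀ j : I,
          ENNReal.ofReal (‖lam (j : ℤ)‖ * ‖u (j : ℤ)‖ / |((j : ℤ) : ℝ)|) ≤ f j * g j := by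
        intro j
        rw [← ENNReal.ofReal_mul (by positivity)]
        apply ENNReal.ofReal_le_ofReal
        have hxpos := hx0 j
        have hkey : |((j : ℤ) : ℝ)| ^ (-1 : ℝ) ≤ |((j : ℤ) : ℝ)| ^ (s1 + s) :=
          Real.rpow_le_rpow_of_exponent_le (hx1 j) (by linarith)
        calc ‖lam (j : ℤ)‖ * ‖u (j : ℤ)‖ / |((j : ℤ) : ℝ)|
            = ‖lam (j : ℤ)‖ * ‖u (j : ℤ)‖ * |((j : ℤ) : ℝ)| ^ (-1 : ℝ) := by
              rw [Real.rpow_neg_one]; ring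
          _ ≤ ‖lam (j : ℤ)‖ * ‖u (j : ℤ)‖ * |((j : ℤ) : ℝ)| ^ (s1 + s) := by
              apply mul_le_mul_of_nonneg_left hkey (by positivity)
          _ = |((j : ℤ) : ℝ)| ^ s1 * ‖lam (j : ℤ)‖ * (|((j : ℤ) : ℝ)| ^ s * ‖u (j : ℤ)‖) := by
              rw [Real.rpow_add hxpos]; ring
      by_cases hsum : Summable (fun j : I => ‖lam (j : ℤ)‖ * ‖u (j : ℤ)‖ / |((j : ℤ) : ℝ)|)
      · calc ENNReal.ofReal C
            = ∑' j : I, ENNReal.ofReal (‖lam (j : ℤ)‖ * ‖u (j : ℤ)‖ / |((j : ℤ) : ℝ)|) :=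
              ENNReal.ofReal_tsum_of_nonneg (fun j => by positivity) hsum
          _ ≤ ∑' j : I, f j * g j := ENNReal.tsum_le_tsum hterm
      · rw [hC, tsum_eq_zero_of_not_summable hsum]
        simp
    exact step1.trans (tsum_mul_le_sqrt_mul_sqrt f g)
  rw [hLHS, hlamA, huB, sq, mul_assoc]
  exact mul_le_mul_right hCle _
end

section
/- Let v, Λ : ℤ → ℂ be sequences with v₀ = Λ₀ = 0, satisfying v_{-j} = conj(v_j) and Λ_{-j} = conj(Λ_j) for all j ∈ ℤ, and such that Σ_{j ≠ 0} (|v_j|² + |Λ_j|²)/|j| < ∞. Then for every nonzero integer k, v_k · Σ_{j ≠ 0, |j| ≠ |k|} (Λ_j + 2v_j)(Λ_{-j} + v_{-j})/j + (Λ_k + v_k) · Σ_{j ≠ 0, |j| ≠ |k|} (Λ_j + 2v_j) v_{-j}/j = Λ_k · Σ_{j ≠ 0, |j| ≠ |k|} Λ_j · conj(v_j)/j. -/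
set_option maxHeartbeats 800000


open Complex

/-- Key resonant cancellation identity in the normal form reduction of periodic KdV with
potential: if `v, Λ : ℤ → ℂ` vanish at `0`, satisfy the conjugate symmetries
`v_{-j} = conj v_j`, `Λ_{-j} = conj Λ_j`, and `∑_{j ≠ 0} (|v_j|² + |Λ_j|²)/|j| < ∞`, then
for every nonzero `k`,
`v_k ∑_{j≠0, |j|≠|k|} (Λ_j + 2v_j)(Λ_{-j} + v_{-j})/j
  + (Λ_k + v_k) ∑_{j≠0, |j|≠|k|} (Λ_j + 2v_j) v_{-j}/j
  = Λ_k ∑_{j≠0, |j|≠|k|} Λ_j conj(v_j)/j`. -/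
theorem stmt_11 (v Λ : ℤ → ℂ) (hv0 : v 0 = 0) (hΛ0 : Λ 0 = 0)
    (hv : ∀ j : ℤ, v (-j) = starRingEnd ℂ (v j))
    (hΛ : ∀ j : ℤ, Λ (-j) = starRingEnd ℂ (Λ j))
    (hsum : Summable fun j : {j : ℤ // j ≠ 0} =>
      (‖v (j : ℤ)‖ ^ 2 + ‖Λ (j : ℤ)‖ ^ 2) / |((j : ℤ) : ℝ)|) :
    ∀ k : ℤ, k ≠ 0 →
      v k * (∑' j : {j : ℤ // j ≠ 0 ∧ |j| ≠ |k|},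
          (Λ (j : ℤ) + 2 * v (j : ℤ)) * (Λ (-(j : ℤ)) + v (-(j : ℤ))) / ((j : ℤ) : ℂ)) +
        (Λ k + v k) * (∑' j : {j : ℤ // j ≠ 0 ∧ |j| ≠ |k|},
          (Λ (j : ℤ) + 2 * v (j : ℤ)) * v (-(j : ℤ)) / ((j : ℤ) : ℂ)) =
      Λ k * (∑' j : {j : ℤ // j ≠ 0 ∧ |j| ≠ |k|},
          Λ (j : ℤ) * starRingEnd ℂ (v (j : ℤ)) / ((j : ℤ) : ℂ)) := by
  intro k hk
  have hmem : ∀ j : ℤ, (j ≠ 0 ∧ |j| ≠ |k|) → (-j ≠ 0 ∧ |(-j)| ≠ |k|) := by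
    intro j hj
    exact ⟨neg_ne_zero.mpr hj.1, by simpa using hj.2⟩
  let e : {j : ℤ // j ≠ 0 ∧ |j| ≠ |k|} ≃ {j : ℤ // j ≠ 0 ∧ |j| ≠ |k|} :=
    { toFun := fun j => ⟨-(j : ℤ), hmem j j.2⟩
      invFun := fun j => ⟨-(j : ℤ), hmem j j.2⟩
      left_inv := fun j => by simp
      right_inv := fun j => by simp }
  have he : ∀ j : {j : ℤ // j ≠ 0 ∧ |j| ≠ |k|}, ((e j : ℤ)) = -(j : ℤ) := fun j => rfl
  -- norms are symmetric under negation
  have hnormv : ∀ j : ℤ, ‖v (-j)‖ = ‖v j‖ := by intro j; rw [hv]; simp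
  have hnormΛ : ∀ j : ℤ, ‖Λ (-j)‖ = ‖Λ j‖ := by intro j; rw [hΛ]; simp
  -- restricted summability of the dominating function
  have hg : Summable fun j : {j : ℤ // j ≠ 0 ∧ |j| ≠ |k|} =>
      (‖v (j : ℤ)‖ ^ 2 + ‖Λ (j : ℤ)‖ ^ 2) / |((j : ℤ) : ℝ)| := by
    have hinj : Function.Injective
        (fun j : {j : ℤ // j ≠ 0 ∧ |j| ≠ |k|} => (⟨(j : ℤ), j.2.1⟩ : {j : ℤ // j ≠ 0})) := by
      intro a b hab
      exact Subtype.ext (by simpa [Subtype.ext_iff] using hab)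
    have h := hsum.comp_injective hinj
    exact h
  -- summability of each quadratic piece
  have key : ∀ a b : ℤ → ℂ, (∀ j : ℤ, ‖a j‖ = ‖v j‖ ∨ ‖a j‖ = ‖Λ j‖) →
      (∀ j : ℤ, ‖b j‖ = ‖v j‖ ∨ ‖b j‖ = ‖Λ j‖) →
      Summable (fun j : {j : ℤ // j ≠ 0 ∧ |j| ≠ |k|} =>
        a (j : ℤ) * b (-(j : ℤ)) / ((j : ℤ) : ℂ)) := by
    intro a b ha hb
    refine hg.of_norm_bounded ?_
    intro j
    rw [norm_div, norm_mul]
    have hj : ‖(((j : ℤ)) : ℂ)‖ = |((j : ℤ) : ℝ)| := by simp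
    rw [hj]
    have hnum : ‖a (j : ℤ)‖ * ‖b (-(j : ℤ))‖ ≤ ‖v (j : ℤ)‖ ^ 2 + ‖Λ (j : ℤ)‖ ^ 2 := by
      rcases ha (j : ℤ) with h1 | h1 <;> rcases hb (-(j : ℤ)) with h2 | h2 <;>
        rw [h1, h2] <;> simp only [hnormv, hnormΛ] <;>
        nlinarith [sq_nonneg (‖v (j : ℤ)‖ - ‖Λ (j : ℤ)‖), sq_nonneg (‖v (j : ℤ)‖),
          sq_nonneg (‖Λ (j : ℤ)‖), norm_nonneg (v (j : ℤ)), norm_nonneg (Λ (j : ℤ))]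
    exact div_le_div_of_nonneg_right hnum (abs_nonneg _)
  have s1 := key Λ Λ (fun j => Or.inr rfl) (fun j => Or.inr rfl)
  have s2 := key Λ v (fun j => Or.inr rfl) (fun j => Or.inl rfl)
  have s3 := key v Λ (fun j => Or.inl rfl) (fun j => Or.inr rfl)
  have s4 := key v v (fun j => Or.inl rfl) (fun j => Or.inl rfl)
  -- odd sums vanish
  have odd : ∀ f : {j : ℤ // j ≠ 0 ∧ |j| ≠ |k|} → ℂ,
      (∀ j, f (e j) = -f j) → ∑' j, f j = 0 := by
    intro f hf
    have h1 : ∑' j, f (e j) = ∑' j, f j := e.tsum_eq f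
    have h2 : ∑' j, f (e j) = -∑' j, f j := by
      simp_rw [hf]; exact tsum_neg
    have h3 := h1.symm.trans h2
    linear_combination h3 / 2
  have hO1 : (∑' j : {j : ℤ // j ≠ 0 ∧ |j| ≠ |k|},
      Λ (j : ℤ) * Λ (-(j : ℤ)) / ((j : ℤ) : ℂ)) = 0 := by
    apply odd
    intro j
    rw [he j]
    push_cast
    rw [neg_neg, div_neg, mul_comm]
  have hO4 : (∑' j : {j : ℤ // j ≠ 0 ∧ |j| ≠ |k|},
      v (j : ℤ) * v (-(j : ℤ)) / ((j : ℤ) : ℂ)) = 0 := by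
    apply odd
    intro j
    rw [he j]
    push_cast
    rw [neg_neg, div_neg, mul_comm]
  -- ∑ F3 = -∑ F2
  set A : ℂ := ∑' j : {j : ℤ // j ≠ 0 ∧ |j| ≠ |k|},
      Λ (j : ℤ) * v (-(j : ℤ)) / ((j : ℤ) : ℂ) with hA
  have hO3 : (∑' j : {j : ℤ // j ≠ 0 ∧ |j| ≠ |k|},
      v (j : ℤ) * Λ (-(j : ℤ)) / ((j : ℤ) : ℂ)) = -A := by
    have h1 := e.tsum_eq (fun j : {j : ℤ // j ≠ 0 ∧ |j| ≠ |k|} =>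
      v (j : ℤ) * Λ (-(j : ℤ)) / ((j : ℤ) : ℂ))
    rw [← h1]
    have : ∀ j : {j : ℤ // j ≠ 0 ∧ |j| ≠ |k|},
        v ((e j : ℤ)) * Λ (-(e j : ℤ)) / (((e j : ℤ)) : ℂ)
          = -(Λ (j : ℤ) * v (-(j : ℤ)) / ((j : ℤ) : ℂ)) := by
      intro j
      rw [he j]
      push_cast
      rw [neg_neg, div_neg, mul_comm]
    rw [tsum_congr this, tsum_neg, hA]
  -- compute the three sums
  have hT3 : (∑' j : {j : ℤ // j ≠ 0 ∧ |j| ≠ |k|},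
      Λ (j : ℤ) * starRingEnd ℂ (v (j : ℤ)) / ((j : ℤ) : ℂ)) = A := by
    apply tsum_congr
    intro j
    rw [← hv]
  have hT2 : (∑' j : {j : ℤ // j ≠ 0 ∧ |j| ≠ |k|},
      (Λ (j : ℤ) + 2 * v (j : ℤ)) * v (-(j : ℤ)) / ((j : ℤ) : ℂ)) = A := by
    have hsplit : ∀ j : {j : ℤ // j ≠ 0 ∧ |j| ≠ |k|},
        (Λ (j : ℤ) + 2 * v (j : ℤ)) * v (-(j : ℤ)) / ((j : ℤ) : ℂ)
          = Λ (j : ℤ) * v (-(j : ℤ)) / ((j : ℤ) : ℂ)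
            + 2 * (v (j : ℤ) * v (-(j : ℤ)) / ((j : ℤ) : ℂ)) := by
      intro j; ring
    rw [tsum_congr hsplit, Summable.tsum_add s2 (s4.mul_left 2), tsum_mul_left, hO4]
    ring
  have hT1 : (∑' j : {j : ℤ // j ≠ 0 ∧ |j| ≠ |k|},
      (Λ (j : ℤ) + 2 * v (j : ℤ)) * (Λ (-(j : ℤ)) + v (-(j : ℤ))) / ((j : ℤ) : ℂ)) = -A := by
    have hsplit : ∀ j : {j : ℤ // j ≠ 0 ∧ |j| ≠ |k|},
        (Λ (j : ℤ) + 2 * v (j : ℤ)) * (Λ (-(j : ℤ)) + v (-(j : ℤ))) / ((j : ℤ) : ℂ)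
          = Λ (j : ℤ) * Λ (-(j : ℤ)) / ((j : ℤ) : ℂ)
            + (Λ (j : ℤ) * v (-(j : ℤ)) / ((j : ℤ) : ℂ)
              + (2 * (v (j : ℤ) * Λ (-(j : ℤ)) / ((j : ℤ) : ℂ))
                + 2 * (v (j : ℤ) * v (-(j : ℤ)) / ((j : ℤ) : ℂ)))) := by
      intro j; ring
    rw [tsum_congr hsplit,
      Summable.tsum_add s1 (s2.add ((s3.mul_left 2).add (s4.mul_left 2))),
      Summable.tsum_add s2 ((s3.mul_left 2).add (s4.mul_left 2)),
      Summable.tsum_add (s3.mul_left 2) (s4.mul_left 2),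
      tsum_mul_left, tsum_mul_left, hO1, hO3, hO4]
    ring
  rw [hT1, hT2, hT3]
  ring
end
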